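/- arXiv:1409.1874 — 6 statements merged into one kernel-verified Lean document; each statement's English description precedes it below -/
import Mathlib

section
/- Let 0 < α ≤ η/2 and let G be a graph on n vertices. If G is (η, α)-robust and Z ⊆ V(G) with |Z| ≤ (αη/8)·n, then the induced subgraph G − Z is (η/2, α/2)-robust, in the sense that its minimum degree is at least (η/2)n and for every partition {X₁, X₂} of V(G)∖Z, the number of edges between X₁ and X₂ is at least (α/2)|X₁||X₂|. -/
/-- Number of ordered pairs `(x, y)` with `x ∈ X`, `y ∈ Y` and `xy ∈ E(G)`; for disjoint
`X`, `Y` this is the number of edges between `X` and `Y`. -/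
noncomputable def eBetween {V : Type*} (G : SimpleGraph V) (X Y : Set V) : ℕ :=
  {p : V × V | p.1 ∈ X ∧ p.2 ∈ Y ∧ G.Adj p.1 p.2}.ncard

/-- Number of neighbors of `v` inside the set `S`. -/
noncomputable def nbrIn {V : Type*} (G : SimpleGraph V) (v : V) (S : Set V) : ℕ :=
  (G.neighborSet v ∩ S).ncard

lemma ncard_prod' {V : Type*} (X Y : Set V) : (X ×ˢ Y).ncard = X.ncard * Y.ncard := by
  rw [← Nat.card_coe_set_eq, Nat.card_congr (Equiv.Set.prod X Y), Nat.card_prod,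
    Nat.card_coe_set_eq, Nat.card_coe_set_eq]

lemma eBetween_le {V : Type} [Fintype V] (G : SimpleGraph V) (X Y : Set V) :
    eBetween G X Y ≤ X.ncard * Y.ncard := by
  rw [← ncard_prod']
  apply Set.ncard_le_ncard _ (Set.toFinite _)
  rintro ⟨a, b⟩ ⟨h1, h2, _⟩
  exact ⟨h1, h2⟩

lemma eBetween_symm {V : Type*} (G : SimpleGraph V) (X Y : Set V) :
    eBetween G X Y = eBetween G Y X := by
  unfold eBetween
  rw [← Nat.card_coe_set_eq, ← Nat.card_coe_set_eq]
  apply Nat.card_congr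
  refine ⟨fun p => ⟨p.1.swap, ?_⟩, fun p => ⟨p.1.swap, ?_⟩, ?_, ?_⟩
  · obtain ⟨h1, h2, h3⟩ := p.2; exact ⟨h2, h1, h3.symm⟩
  · obtain ⟨h1, h2, h3⟩ := p.2; exact ⟨h2, h1, h3.symm⟩
  · rintro ⟨p, hp⟩; simp
  · rintro ⟨p, hp⟩; simp

lemma eBetween_union_right {V : Type} [Fintype V] (G : SimpleGraph V) (X Y Z : Set V)
    (h : Disjoint Y Z) : eBetween G X (Y ∪ Z) = eBetween G X Y + eBetween G X Z := by
  unfold eBetween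
  rw [← Set.ncard_union_eq _ (Set.toFinite _) (Set.toFinite _)]
  · congr 1
    ext ⟨a, b⟩
    simp only [Set.mem_setOf_eq, Set.mem_union]
    constructor
    · rintro ⟨h1, h2 | h2, h3⟩
      · exact Or.inl ⟨h1, h2, h3⟩
      · exact Or.inr ⟨h1, h2, h3⟩
    · rintro (⟨h1, h2, h3⟩ | ⟨h1, h2, h3⟩)
      · exact ⟨h1, Or.inl h2, h3⟩
      · exact ⟨h1, Or.inr h2, h3⟩
  · rw [Set.disjoint_left]
    rintro ⟨a, b⟩ ⟨_, h2, _⟩ ⟨_, h2', _⟩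
    exact (Set.disjoint_left.mp h h2) h2'

/-- Key one-sided bound: if `X₂` is large, the cut bound holds. -/
lemma cut_case {V : Type} [Fintype V] (G : SimpleGraph V) (n : ℕ)
    (hn : Fintype.card V = n) (η α : ℝ) (hα : 0 < α)
    (hcut : ∀ X : Set V, α * X.ncard * Xᶜ.ncard ≤ (eBetween G X Xᶜ : ℝ))
    (Z : Set V) (hZ : (Z.ncard : ℝ) ≤ α * η / 8 * n)
    (X₁ X₂ : Set V) (hd : Disjoint X₁ X₂) (hu : X₁ ∪ X₂ = Zᶜ)
    (hbig : η / 4 * n ≤ (X₂.ncard : ℝ)) :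
    α / 2 * X₁.ncard * X₂.ncard ≤ (eBetween G X₁ X₂ : ℝ) := by
  have hX2Z : Disjoint X₂ Z := by
    rw [Set.disjoint_left]
    intro a ha
    have : a ∈ Zᶜ := hu ▸ Or.inr ha
    exact this
  have hcompl : X₁ᶜ = X₂ ∪ Z := by
    ext a
    simp only [Set.mem_compl_iff, Set.mem_union]
    constructor
    · intro h
      by_cases hz : a ∈ Z
      · exact Or.inr hz
      · have : a ∈ X₁ ∪ X₂ := hu ▸ hz
        rcases this with h' | h'
        · exact absurd h' h
        · exact Or.inl h'
    · rintro (h | h)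
      · exact Set.disjoint_right.mp hd h
      · intro h1
        have : a ∈ Zᶜ := hu ▸ Or.inl h1
        exact this h
  have hsplit : eBetween G X₁ X₁ᶜ = eBetween G X₁ X₂ + eBetween G X₁ Z := by
    rw [hcompl]; exact eBetween_union_right G X₁ X₂ Z hX2Z
  have hc := hcut X₁
  rw [hsplit] at hc
  have hcard : (X₁ᶜ.ncard : ℝ) = X₂.ncard + Z.ncard := by
    rw [hcompl, Set.ncard_union_eq hX2Z (Set.toFinite _) (Set.toFinite _)]
    push_cast; ring
  rw [hcard] at hc
  have hE1Z : (eBetween G X₁ Z : ℝ) ≤ (X₁.ncard : ℝ) * Z.ncard := by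
    exact_mod_cast eBetween_le G X₁ Z
  have hZX2 : (Z.ncard : ℝ) ≤ α / 2 * X₂.ncard := by
    calc (Z.ncard : ℝ) ≤ α * η / 8 * n := hZ
      _ = α / 2 * (η / 4 * n) := by ring
      _ ≤ α / 2 * X₂.ncard := by
        apply mul_le_mul_of_nonneg_left hbig (by linarith)
  have h1 : (0:ℝ) ≤ X₁.ncard := Nat.cast_nonneg _
  have h2 : (0:ℝ) ≤ Z.ncard := Nat.cast_nonneg _
  have hαZ : (0:ℝ) ≤ α * X₁.ncard * Z.ncard := by positivity
  push_cast at hc ⊢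
  nlinarith [mul_le_mul_of_nonneg_left hZX2 h1]

/-- if `0 < α ≤ η/2`, `G` is `(η, α)`-robust on `n` vertices, and
`Z ⊆ V(G)` with `|Z| ≤ (αη/8)n`, then `G - Z` is `(η/2, α/2)`-robust (with respect to
the same `n`): every vertex outside `Z` has at least `(η/2)n` neighbors outside `Z`,
and every partition `{X₁, X₂}` of `V(G) ∖ Z` satisfies `e(X₁, X₂) ≥ (α/2)|X₁||X₂|`. -/
theorem observation_slicerobust {V : Type} [Fintype V] (G : SimpleGraph V) (n : ℕ)
    (hn : Fintype.card V = n) (η α : ℝ) (hα : 0 < α) (hαη : α ≤ η / 2)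
    (hdeg : ∀ v : V, η * n ≤ ((G.neighborSet v).ncard : ℝ))
    (hcut : ∀ X : Set V, α * X.ncard * Xᶜ.ncard ≤ (eBetween G X Xᶜ : ℝ))
    (Z : Set V) (hZ : (Z.ncard : ℝ) ≤ α * η / 8 * n) :
    (∀ v ∈ Zᶜ, η / 2 * n ≤ (nbrIn G v Zᶜ : ℝ)) ∧
      ∀ X₁ X₂ : Set V, Disjoint X₁ X₂ → X₁ ∪ X₂ = Zᶜ →
        α / 2 * X₁.ncard * X₂.ncard ≤ (eBetween G X₁ X₂ : ℝ) := by
  have hη : 0 < η := by linarith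
  -- If V is empty everything is trivial
  rcases isEmpty_or_nonempty V with hV | hV
  · have hn0 : n = 0 := by rw [← hn]; simp
    constructor
    · intro v _; exact (hV.false v).elim
    · intro X₁ X₂ _ _
      have : X₁ = ∅ := Set.eq_empty_of_isEmpty X₁
      simp [this, Nat.cast_nonneg]
  -- n > 0 and η ≤ 1
  have hnpos : 0 < (n:ℝ) := by
    have : 0 < Fintype.card V := Fintype.card_pos
    rw [hn] at this; exact_mod_cast this
  have hη1 : η ≤ 1 := by
    obtain ⟨v⟩ := hV
    have h1 := hdeg v
    have h2 : (G.neighborSet v).ncard ≤ n := by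
      rw [← hn, ← Nat.card_eq_fintype_card, ← Set.ncard_univ]
      exact Set.ncard_le_ncard (Set.subset_univ _) (Set.toFinite _)
    have h2' : ((G.neighborSet v).ncard : ℝ) ≤ n := by exact_mod_cast h2
    nlinarith
  have hZ' : (Z.ncard : ℝ) ≤ η / 16 * n := by
    calc (Z.ncard : ℝ) ≤ α * η / 8 * n := hZ
      _ ≤ η / 16 * n := by nlinarith
  constructor
  · intro v hv
    have hd := hdeg v
    have hsub : G.neighborSet v ⊆ (G.neighborSet v ∩ Zᶜ) ∪ Z := by
      intro a ha
      by_cases hz : a ∈ Z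
      · exact Or.inr hz
      · exact Or.inl ⟨ha, hz⟩
    have hle : (G.neighborSet v).ncard ≤ (G.neighborSet v ∩ Zᶜ).ncard + Z.ncard := by
      calc (G.neighborSet v).ncard ≤ ((G.neighborSet v ∩ Zᶜ) ∪ Z).ncard :=
            Set.ncard_le_ncard hsub (Set.toFinite _)
        _ ≤ _ := Set.ncard_union_le _ _
    have hle' : ((G.neighborSet v).ncard : ℝ) ≤ (nbrIn G v Zᶜ : ℝ) + Z.ncard := by
      unfold nbrIn; exact_mod_cast hle
    nlinarith
  · intro X₁ X₂ hd hu
    -- one of X₁, X₂ has size ≥ η/4 * n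
    have hcardsum : (X₁.ncard : ℝ) + X₂.ncard + Z.ncard = n := by
      have : (X₁ ∪ X₂).ncard + Z.ncard = n := by
        rw [hu, ← hn, ← Nat.card_eq_fintype_card, ← Set.ncard_univ]
        rw [← Set.ncard_union_eq (disjoint_compl_left) (Set.toFinite _) (Set.toFinite _)]
        rw [Set.compl_union_self]
      rw [Set.ncard_union_eq hd (Set.toFinite _) (Set.toFinite _)] at this
      exact_mod_cast this
    by_cases hbig : η / 4 * n ≤ (X₂.ncard : ℝ)
    · exact cut_case G n hn η α hα hcut Z hZ X₁ X₂ hd hu hbig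
    · have hbig1 : η / 4 * n ≤ (X₁.ncard : ℝ) := by
        push_neg at hbig
        nlinarith
      have := cut_case G n hn η α hα hcut Z hZ X₂ X₁ hd.symm
        (by rw [Set.union_comm]; exact hu) hbig1
      rw [eBetween_symm] at this
      linarith [this]
end

section
/- Let 0 < α ≤ η/8 and let G be an (η, α)-robust graph on n vertices. Then for every vertex x ∈ V(G) there exists an integer k with 1 ≤ k ≤ ⌊1/α²⌋ − 1 and a partition {X₁, …, X_k} of V(G)∖{x} such that X₁ = N(x) and for all 1 ≤ i ≤ k−1, every vertex of X_{i+1} has at least α²n/k neighbors in X_i. -/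
section nbrIn

variable {V : Type*} (G : SimpleGraph V) (v : V)

lemma nbrIn_le_ncard [Finite V] (S : Set V) : nbrIn G v S ≤ S.ncard :=
  Set.ncard_le_ncard Set.inter_subset_right

lemma nbrIn_union_le (S T : Set V) : nbrIn G v (S ∪ T) ≤ nbrIn G v S + nbrIn G v T := by
  rw [nbrIn, Set.inter_union_distrib_left]
  exact Set.ncard_union_le _ _

lemma nbrIn_singleton_of_not_adj {x : V} (h : ¬ G.Adj v x) : nbrIn G v {x} = 0 := by
  rw [nbrIn, Set.inter_singleton_eq_empty.mpr (by exact h), Set.ncard_empty]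

lemma nbrIn_add_nbrIn_compl [Finite V] (S : Set V) :
    nbrIn G v S + nbrIn G v Sᶜ = (G.neighborSet v).ncard := by
  rw [nbrIn, nbrIn, ← Set.sdiff_eq, Set.ncard_inter_add_ncard_sdiff_eq_ncard]

lemma eBetween_eq_sum_nbrIn [Finite V] (X : Finset V) (Y : Set V) :
    eBetween G X Y = ∑ v ∈ X, nbrIn G v Y := by
  classical
  cases nonempty_fintype V
  have hpairs : {p : V × V | p.1 ∈ (X : Set V) ∧ p.2 ∈ Y ∧ G.Adj p.1 p.2} =
      ↑{p ∈ X ×ˢ (Finset.univ : Finset V) | p.2 ∈ Y ∧ G.Adj p.1 p.2} := by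
    ext; simp
  rw [eBetween, hpairs, Set.ncard_coe_finset, Finset.card_filter, Finset.sum_product]
  refine Finset.sum_congr rfl fun v _ => ?_
  rw [← Finset.card_filter, nbrIn, ← Set.ncard_coe_finset]
  congr 1
  ext; simp [and_comm]

end nbrIn

section cascade

variable {V : Type*} (G : SimpleGraph V) (τ : ℝ) (x : V)

/-- `cascade G τ x i = (Xᵢ, {x} ∪ X₁ ∪ ⋯ ∪ Xᵢ)`, where `X₁ = N(x)` and `Xᵢ₊₁` consists of the
vertices not reached yet that have at least `τ` neighbours in `Xᵢ`. -/
noncomputable def cascade (G : SimpleGraph V) (τ : ℝ) (x : V) : ℕ → Set V × Set V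
  | 0 => (∅, {x})
  | 1 => (G.neighborSet x, {x} ∪ G.neighborSet x)
  | i + 2 =>
    let next := {v | v ∉ (cascade G τ x (i + 1)).2 ∧ τ ≤ nbrIn G v (cascade G τ x (i + 1)).1}
    (next, (cascade G τ x (i + 1)).2 ∪ next)

noncomputable def layer (i : ℕ) : Set V := (cascade G τ x i).1

noncomputable def reached (i : ℕ) : Set V := (cascade G τ x i).2

lemma layer_one : layer G τ x 1 = G.neighborSet x := rfl

lemma reached_one : reached G τ x 1 = {x} ∪ G.neighborSet x := rfl

lemma layer_add_two (i : ℕ) :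
    layer G τ x (i + 2) =
      {v | v ∉ reached G τ x (i + 1) ∧ τ ≤ nbrIn G v (layer G τ x (i + 1))} := rfl

lemma reached_succ (i : ℕ) : reached G τ x (i + 1) = reached G τ x i ∪ layer G τ x (i + 1) := by
  cases i <;> rfl

lemma reached_mono : Monotone (reached G τ x) :=
  monotone_nat_of_le_succ fun i => by rw [reached_succ]; exact Set.subset_union_left

lemma mem_reached (i : ℕ) : x ∈ reached G τ x i :=
  reached_mono G τ x i.zero_le rfl

lemma layer_subset_reached (i : ℕ) : layer G τ x i ⊆ reached G τ x i := by
  cases i with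
  | zero => exact Set.empty_subset _
  | succ i => rw [reached_succ]; exact Set.subset_union_right

lemma disjoint_layer_succ_reached (i : ℕ) :
    Disjoint (layer G τ x (i + 1)) (reached G τ x i) := by
  rcases i with _ | i
  · exact Set.disjoint_singleton_right.mpr G.irrefl
  · exact Set.disjoint_left.mpr fun _ hv => hv.1

lemma not_mem_layer (i : ℕ) : x ∉ layer G τ x i := by
  rcases i with _ | i
  · exact Set.notMem_empty x
  · exact Set.disjoint_right.mp (disjoint_layer_succ_reached G τ x i) (mem_reached G τ x i)

lemma disjoint_layer {i j : ℕ} (hij : i ≠ j) : Disjoint (layer G τ x i) (layer G τ x j) := by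
  wlog hlt : i < j generalizing i j
  · exact (this hij.symm (by omega)).symm
  obtain ⟨j, rfl⟩ := Nat.exists_eq_add_of_lt hlt
  exact ((disjoint_layer_succ_reached G τ x _).mono_right
    ((layer_subset_reached G τ x i).trans (reached_mono G τ x (by omega)))).symm

lemma reached_eq_insert_biUnion_layer (i : ℕ) :
    reached G τ x i = insert x (⋃ j ∈ Set.Icc 1 i, layer G τ x j) := by
  induction i with
  | zero => simp [reached, cascade]
  | succ i ih =>
    ext v
    simp only [reached_succ, ih, Set.mem_union, Set.mem_insert_iff, Set.mem_iUnion,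
      Set.mem_Icc, Nat.le_add_one_iff, and_or_left]
    grind

lemma biUnion_layer_eq (i : ℕ) :
    ⋃ j ∈ Set.Icc 1 i, layer G τ x j = reached G τ x i \ {x} := by
  rw [reached_eq_insert_biUnion_layer, Set.insert_sdiff_self_of_notMem]
  simp only [Set.mem_iUnion, not_exists]
  exact fun j _ => not_mem_layer G τ x j

lemma ncard_reached_succ [Finite V] (i : ℕ) :
    (reached G τ x (i + 1)).ncard = (reached G τ x i).ncard + (layer G τ x (i + 1)).ncard := by
  rw [reached_succ, Set.ncard_union_eq (disjoint_layer_succ_reached G τ x i).symm]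

lemma le_nbrIn_of_mem_layer {i : ℕ} {v : V} (hv : v ∈ layer G τ x (i + 2)) :
    τ ≤ nbrIn G v (layer G τ x (i + 1)) := by
  rw [layer_add_two] at hv
  exact hv.2

lemma nbrIn_layer_lt {i : ℕ} {v : V} (hv : v ∉ reached G τ x (i + 2)) :
    (nbrIn G v (layer G τ x (i + 1)) : ℝ) < τ := by
  rw [reached_succ, Set.mem_union, not_or, layer_add_two] at hv
  exact lt_of_not_ge fun h => hv.2 ⟨hv.1, h⟩

lemma nbrIn_reached_le [Finite V] {i : ℕ} {v : V} (hv : v ∉ reached G τ x (i + 1)) :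
    (nbrIn G v (reached G τ x (i + 1)) : ℝ) ≤ i * τ + nbrIn G v (layer G τ x (i + 1)) := by
  induction i with
  | zero =>
    have hvx : ¬ G.Adj v x := fun h => hv (Or.inr h.symm)
    have := nbrIn_union_le G v {x} (G.neighborSet x)
    rw [nbrIn_singleton_of_not_adj G v hvx, zero_add] at this
    rw [reached_one, layer_one]
    simpa using this
  | succ i ih =>
    have hprev := nbrIn_layer_lt G τ x hv
    rw [reached_succ, Set.mem_union, not_or] at hv
    calc (nbrIn G v (reached G τ x (i + 2)) : ℝ)
        ≤ nbrIn G v (reached G τ x (i + 1)) + nbrIn G v (layer G τ x (i + 2)) := by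
          rw [reached_succ]; exact_mod_cast nbrIn_union_le G v _ _
      _ ≤ ↑(i + 1) * τ + nbrIn G v (layer G τ x (i + 2)) := by
          push_cast; linarith [ih hv.1]

lemma reached_add_two_eq_univ [Finite V] {i : ℕ}
    (hdeg : ∀ v ∉ reached G τ x (i + 1),
      (i + 1) * τ + ((reached G τ x (i + 1))ᶜ.ncard : ℝ) ≤ (G.neighborSet v).ncard) :
    reached G τ x (i + 2) = Set.univ := by
  refine Set.eq_univ_of_forall fun v => ?_
  rw [reached_succ]
  by_cases hv : v ∈ reached G τ x (i + 1)
  · exact Or.inl hv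
  rw [layer_add_two]
  refine Or.inr ⟨hv, ?_⟩
  have hsplit : (nbrIn G v (reached G τ x (i + 1)) : ℝ) + nbrIn G v (reached G τ x (i + 1))ᶜ =
      (G.neighborSet v).ncard := by
    exact_mod_cast nbrIn_add_nbrIn_compl G v _
  have hout : (nbrIn G v (reached G τ x (i + 1))ᶜ : ℝ) ≤ (reached G τ x (i + 1))ᶜ.ncard := by
    exact_mod_cast nbrIn_le_ncard G v _
  linarith [nbrIn_reached_le G τ x hv, hdeg v hv]

lemma eBetween_compl_reached_le [Finite V] (hτ : 0 ≤ τ) (i : ℕ) :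
    (eBetween G (reached G τ x (i + 1))ᶜ (reached G τ x (i + 1)) : ℝ) ≤
      (layer G τ x (i + 2)).ncard * (reached G τ x (i + 1)).ncard +
        (reached G τ x (i + 1))ᶜ.ncard * ((i + 1) * τ) := by
  classical
  cases nonempty_fintype V
  set R := reached G τ x (i + 1)
  set L := layer G τ x (i + 2)
  have hLR : L.toFinset ⊆ Rᶜ.toFinset :=
    Set.toFinset_subset_toFinset.mpr (disjoint_layer_succ_reached G τ x (i + 1)).subset_compl_right
  conv_lhs => rw [← Set.coe_toFinset Rᶜ, eBetween_eq_sum_nbrIn, ← Finset.sum_sdiff hLR]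
  push_cast
  have hin : ∑ v ∈ L.toFinset, (nbrIn G v R : ℝ) ≤ L.ncard * R.ncard := by
    calc ∑ v ∈ L.toFinset, (nbrIn G v R : ℝ)
        ≤ L.toFinset.card • (R.ncard : ℝ) :=
          Finset.sum_le_card_nsmul _ _ _ fun v _ => by exact_mod_cast nbrIn_le_ncard G v R
      _ = L.ncard * R.ncard := by rw [nsmul_eq_mul, Set.ncard_eq_toFinset_card' L]
  have hout : ∑ v ∈ Rᶜ.toFinset \ L.toFinset, (nbrIn G v R : ℝ) ≤ Rᶜ.ncard * ((i + 1) * τ) := by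
    calc ∑ v ∈ Rᶜ.toFinset \ L.toFinset, (nbrIn G v R : ℝ)
        ≤ (Rᶜ.toFinset \ L.toFinset).card • ((i + 1) * τ) := by
          refine Finset.sum_le_card_nsmul _ _ _ fun v hv => ?_
          simp only [Finset.mem_sdiff, Set.mem_toFinset, Set.mem_compl_iff] at hv
          have hv' : v ∉ reached G τ x (i + 2) := by
            rw [reached_succ]; exact fun h => h.elim hv.1 hv.2
          linarith [nbrIn_reached_le G τ x hv.1, nbrIn_layer_lt G τ x hv']
      _ ≤ Rᶜ.toFinset.card • ((i + 1) * τ) :=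
          nsmul_le_nsmul_left (by positivity) (Finset.card_le_card Finset.sdiff_subset)
      _ = Rᶜ.ncard * ((i + 1) * τ) := by rw [nsmul_eq_mul, Set.ncard_eq_toFinset_card']
  linarith

end cascade

section robust

variable {V : Type*} [Finite V] {G : SimpleGraph V} {n : ℕ} {η α τ : ℝ}

lemma reached_add_two_eq_univ_or_le_ncard_layer (hα : 0 < α) (hα1 : α ≤ 1) (hαη : α ≤ η / 8)
    (hdeg : ∀ v : V, η * n ≤ ((G.neighborSet v).ncard : ℝ))
    (hcut : ∀ X : Set V, α * X.ncard * Xᶜ.ncard ≤ (eBetween G X Xᶜ : ℝ))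
    (x : V) (hτ : 0 ≤ τ) {i : ℕ} (hiτ : (i + 1) * τ ≤ α ^ 2 * n) :
    reached G τ x (i + 2) = Set.univ ∨ 6 * α ^ 2 * n ≤ (layer G τ x (i + 2)).ncard := by
  set R := reached G τ x (i + 1)
  have hR : 8 * α * n ≤ (R.ncard : ℝ) := by
    have hNR : G.neighborSet x ⊆ R :=
      Set.subset_union_right.trans (reached_mono G τ x (by omega : 1 ≤ i + 1))
    calc 8 * α * n ≤ η * n := by gcongr; linarith
      _ ≤ (G.neighborSet x).ncard := hdeg x
      _ ≤ R.ncard := by exact_mod_cast Set.ncard_le_ncard hNR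
  have hαn : α ^ 2 * n ≤ α * n := by
    rw [sq, mul_assoc]
    exact mul_le_of_le_one_left (by positivity) hα1
  by_cases hsmall : (Rᶜ.ncard : ℝ) ≤ 7 * α * n
  · left
    refine reached_add_two_eq_univ G τ x fun v _ => ?_
    linarith [hdeg v, mul_le_mul_of_nonneg_right (by linarith : 8 * α ≤ η) (Nat.cast_nonneg n)]
  · right
    replace hsmall := not_le.mp hsmall
    have hRpos : (0 : ℝ) < R.ncard := by
      exact_mod_cast (Set.ncard_pos (Set.toFinite _)).mpr ⟨x, mem_reached G τ x _⟩
    have hcutR := hcut Rᶜ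
    rw [compl_compl] at hcutR
    have hgrow := eBetween_compl_reached_le G τ x hτ i
    -- `|R| ≥ |N(x)| ≥ 8αn`: a vertex outside the new layer has at most `α|R|/8` neighbours in `R`
    have hfew : (Rᶜ.ncard : ℝ) * ((i + 1) * τ) ≤ Rᶜ.ncard * (α * R.ncard / 8) :=
      mul_le_mul_of_nonneg_left (by nlinarith) (Nat.cast_nonneg _)
    have hmul : 6 * α ^ 2 * n * R.ncard ≤ (layer G τ x (i + 2)).ncard * R.ncard := by
      nlinarith [mul_lt_mul_of_pos_right hsmall (mul_pos hα hRpos)]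
    exact le_of_mul_le_mul_right hmul hRpos

lemma reached_eq_univ_of_robust (hn : Nat.card V = n) (hα : 0 < α) (hα1 : α ≤ 1)
    (hαη : α ≤ η / 8) (hdeg : ∀ v : V, η * n ≤ ((G.neighborSet v).ncard : ℝ))
    (hcut : ∀ X : Set V, α * X.ncard * Xᶜ.ncard ≤ (eBetween G X Xᶜ : ℝ))
    (x : V) (hτ : 0 ≤ τ) {K : ℕ} (hK : 1 ≤ 6 * α ^ 2 * ((K : ℝ) - 1))
    (hKτ : K * τ ≤ α ^ 2 * n) :
    reached G τ x K = Set.univ := by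
  rcases K with _ | m
  · norm_num at hK
    nlinarith [sq_nonneg α]
  push_cast at hK hKτ
  have hgrow : ∀ i ≤ m, reached G τ x (i + 1) = Set.univ ∨
      1 + 6 * α ^ 2 * n * i ≤ (reached G τ x (i + 1)).ncard := by
    intro i
    induction i with
    | zero =>
      refine fun _ => Or.inr ?_
      norm_num
      exact (Set.ncard_pos (Set.toFinite _)).mpr ⟨x, mem_reached G τ x 1⟩
    | succ i ih =>
      intro hi
      rcases ih (by omega) with huniv | hcard
      · left
        exact Set.eq_univ_of_univ_subset (huniv ▸ reached_mono G τ x (by omega))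
      have hiτ : ((i : ℝ) + 1) * τ ≤ α ^ 2 * n := by
        refine le_trans (mul_le_mul_of_nonneg_right ?_ hτ) hKτ
        exact_mod_cast (by omega : i + 1 ≤ m + 1)
      refine (reached_add_two_eq_univ_or_le_ncard_layer hα hα1 hαη hdeg hcut x hτ hiτ).imp
        id fun hlayer => ?_
      rw [ncard_reached_succ]
      push_cast
      linarith
  have hle : ((reached G τ x (m + 1)).ncard : ℝ) ≤ n := by
    rw [← hn]
    exact_mod_cast Set.ncard_le_card _
  refine (hgrow m le_rfl).resolve_right fun hcard => ?_
  nlinarith [Nat.cast_nonneg (α := ℝ) n]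

end robust

lemma exists_nat_eq_floor_inv_sq_sub_one {α : ℝ} (hα : 0 < α) (hα8 : α ≤ 1 / 8) :
    ∃ K : ℕ, 1 ≤ K ∧ (K : ℤ) = ⌊1 / α ^ 2⌋ - 1 ∧ 1 ≤ 6 * α ^ 2 * ((K : ℝ) - 1) := by
  have hinv : 64 ≤ 1 / α ^ 2 := by
    rw [le_div_iff₀ (by positivity)]
    nlinarith
  have hfloor : (64 : ℤ) ≤ ⌊1 / α ^ 2⌋ := Int.le_floor.mpr (by exact_mod_cast hinv)
  obtain ⟨K, hK⟩ := Int.eq_ofNat_of_zero_le (by omega : 0 ≤ ⌊1 / α ^ 2⌋ - 1)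
  refine ⟨K, by omega, hK.symm, ?_⟩
  have hKR : (K : ℝ) = ⌊1 / α ^ 2⌋ - 1 := by exact_mod_cast hK.symm
  have hlt := Int.lt_floor_add_one (1 / α ^ 2)
  have hcancel : α ^ 2 * (1 / α ^ 2) = 1 := mul_one_div_cancel (by positivity)
  rw [hKR]
  nlinarith

/-- if `0 < α ≤ η/8` and `G` is `(η, α)`-robust on `n` vertices, then every
vertex `x` has a spanning `(k, α²)`-neighborhood cascade with `1 ≤ k ≤ ⌊1/α²⌋ - 1`:
a partition `{X₁, …, X_k}` of `V(G) ∖ {x}` with `X₁ = N(x)` and, for `1 ≤ i ≤ k - 1`,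
every vertex of `X_{i+1}` has at least `α²n/k` neighbors in `X_i`. -/
theorem lemma_neighborcascade {V : Type} [Fintype V] (G : SimpleGraph V) (n : ℕ)
    (hn : Fintype.card V = n) (η α : ℝ) (hα : 0 < α) (hαη : α ≤ η / 8)
    (hdeg : ∀ v : V, η * n ≤ ((G.neighborSet v).ncard : ℝ))
    (hcut : ∀ X : Set V, α * X.ncard * Xᶜ.ncard ≤ (eBetween G X Xᶜ : ℝ)) :
    ∀ x : V, ∃ (k : ℕ) (X : ℕ → Set V),
      1 ≤ k ∧ (k : ℤ) ≤ ⌊1 / α ^ 2⌋ - 1 ∧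
      (∀ i ∈ Set.Icc 1 k, ∀ j ∈ Set.Icc 1 k, i ≠ j → Disjoint (X i) (X j)) ∧
      (⋃ i ∈ Set.Icc 1 k, X i) = {x}ᶜ ∧
      X 1 = G.neighborSet x ∧
      (∀ i : ℕ, 1 ≤ i → i + 1 ≤ k → ∀ v ∈ X (i + 1),
        α ^ 2 * n / k ≤ (nbrIn G v (X i) : ℝ)) := by
  intro x
  have hcard : Nat.card V = n := Nat.card_eq_fintype_card.trans hn
  have hα8 : α ≤ 1 / 8 := by
    have hdeg_lt : ((G.neighborSet x).ncard : ℝ) < n := by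
      rw [← hcard]
      exact_mod_cast Set.ncard_lt_card fun h => G.irrefl (h.symm ▸ Set.mem_univ x : x ∈ _)
    have hη : η < 1 := lt_of_mul_lt_mul_right (by linarith [hdeg x]) (Nat.cast_nonneg n)
    linarith
  obtain ⟨K, hK1, hKfloor, hK⟩ := exists_nat_eq_floor_inv_sq_sub_one hα hα8
  set τ := α ^ 2 * n / K
  have hKτ : K * τ = α ^ 2 * n := mul_div_cancel₀ _ (by positivity)
  have hcov := reached_eq_univ_of_robust hcard hα (by linarith) hαη hdeg hcut x
    (by positivity) hK hKτ.le
  refine ⟨K, layer G τ x, hK1, hKfloor.le, fun i _ j _ hij => disjoint_layer G τ x hij, ?_,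
    layer_one G τ x, fun i hi _ v hv => ?_⟩
  · rw [biUnion_layer_eq, hcov, Set.compl_eq_univ_sdiff]
  · obtain ⟨i, rfl⟩ := Nat.exists_eq_add_of_le' hi
    exact le_nbrIn_of_mem_layer G τ x hv
end

section
/- Let G be a graph on n vertices (n even) with δ(G) ≥ 3n/4, and let E(G) = E₁ ∪ E₂ be a 2-multicoloring of its edges (an edge may receive both colors). Suppose H₁ is a connected component of G₁ = (V(G), E₁) with V(H₁) = V(G), and every connected component of G₂ = (V(G), E₂) has at most n/2 vertices. Then G₁ contains a perfect matching whose every edge joins two distinct components of G₂. -/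
/-!
Colour each vertex by its `G₂`-component. An edge of `G` between different colour classes cannot
be a `G₂`-edge, so it lies in `G₁`; it therefore suffices to find a perfect matching in `G` with
its monochromatic edges removed, for any colouring whose classes have at most `n/2` vertices.

Take a maximum matching `M` of that graph. Two uncovered vertices have at least `n/2` common
neighbours; if their colours differed, then either one of these neighbours is uncovered or two of
them are matched to each other, and in both cases `M` could be enlarged. So all uncovered vertices
lie in one class `C`, and counting then yields an edge `q q'` of `M` avoiding `C`. If there were
two uncovered vertices `u, w`, exchanging matching edges shows that `q` is adjacent neither to `u`
nor to the partner of any bichromatic neighbour of `u`. But `u` has at least `n/4` bichromatic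
neighbours and `q` at least `3n/4` neighbours, so these vertices do not fit into `n`.
-/

open Set

namespace SimpleGraph

variable {V ι : Type*}

def bichromatic (G : SimpleGraph V) (c : V → ι) : SimpleGraph V :=
  G ⊓ (⊤ : SimpleGraph ι).comap c

@[simp]
lemma bichromatic_adj {G : SimpleGraph V} {c : V → ι} {a b : V} :
    (G.bichromatic c).Adj a b ↔ G.Adj a b ∧ c a ≠ c b := by
  simp [bichromatic]

lemma bichromatic_connectedComponentMk_le {G G₁ G₂ : SimpleGraph V} (h : G ≤ G₁ ⊔ G₂) :
    G.bichromatic G₂.connectedComponentMk ≤ G₁ := by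
  rintro a b ⟨hab, hc⟩
  exact (h hab).resolve_right fun h₂ =>
    hc (ConnectedComponent.connectedComponentMk_eq_of_adj h₂)

lemma ncard_neighborSet_le_ncard_neighborSet_bichromatic_add [Finite V] (G : SimpleGraph V)
    (c : V → ι) (u : V) :
    (G.neighborSet u).ncard ≤
      ((G.bichromatic c).neighborSet u).ncard + (c ⁻¹' {c u}).ncard := by
  refine (ncard_le_ncard fun v hv => ?_).trans (ncard_union_le _ _)
  by_cases h : c u = c v
  · exact Or.inr h.symm
  · exact Or.inl (bichromatic_adj.2 ⟨hv, h⟩)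

lemma le_two_mul_ncard_inter_neighborSet [Finite V] {G : SimpleGraph V} {u w : V}
    (hu : 3 * Nat.card V ≤ 4 * (G.neighborSet u).ncard)
    (hw : 3 * Nat.card V ≤ 4 * (G.neighborSet w).ncard) :
    Nat.card V ≤ 2 * (G.neighborSet u ∩ G.neighborSet w).ncard := by
  have := ncard_union_add_ncard_inter (G.neighborSet u) (G.neighborSet w)
  have := ncard_le_card (G.neighborSet u ∪ G.neighborSet w)
  omega

namespace Subgraph

variable {H : SimpleGraph V} {M : H.Subgraph} {a b x y : V}

lemma IsMatching.deleteVerts {s : Set V} (hM : M.IsMatching)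
    (hs : ∀ ⦃v w⦄, M.Adj v w → v ∈ s → w ∈ s) : (M.deleteVerts s).IsMatching := by
  rintro v ⟨hv, hvs⟩
  obtain ⟨w, hvw, huniq⟩ := hM hv
  refine ⟨w, deleteVerts_adj.2
    ⟨hv, hvs, M.edge_vert hvw.symm, fun hw => hvs (hs hvw.symm hw), hvw⟩,
    fun w' hvw' => huniq w' (deleteVerts_adj.1 hvw').2.2.2.2⟩

lemma IsMatching.even_ncard_verts [Finite V] (hM : M.IsMatching) : Even M.verts.ncard := by
  classical
  cases nonempty_fintype V
  rw [ncard_eq_toFinset_card']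
  exact hM.even_card

lemma IsMatching.ncard_le_ncard_of_forall_exists_adj [Finite V] (hM : M.IsMatching)
    {s t : Set V} (h : ∀ x ∈ s, ∃ y ∈ t, M.Adj x y) : s.ncard ≤ t.ncard := by
  choose! f hf using h
  exact ncard_le_ncard_of_injOn f (fun x hx => (hf x hx).1)
    fun x hx x' hx' hxx' => hM.eq_of_adj_right (hf x hx).2 (hxx' ▸ (hf x' hx').2)

lemma IsMatching.exists_adj_of_ncard_verts_lt [Finite V] (hM : M.IsMatching) {s : Set V}
    (hs : s ⊆ M.verts) (h : M.verts.ncard < 2 * s.ncard) :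
    ∃ x ∈ s, ∃ y ∈ s, M.Adj x y := by
  by_contra! hno
  have hle : s.ncard ≤ (M.verts \ s).ncard :=
    hM.ncard_le_ncard_of_forall_exists_adj fun x hx => by
      obtain ⟨y, hxy, -⟩ := hM (hs hx)
      exact ⟨y, ⟨M.edge_vert hxy.symm, fun hy => hno x hx y hy hxy⟩, hxy⟩
  have := ncard_inter_add_ncard_sdiff_eq_ncard M.verts s
  rw [inter_eq_right.2 hs] at this
  omega

lemma IsMatching.ncard_inter_eq_ncard_sdiff [Finite V] (hM : M.IsMatching) {s : Set V}
    (hs : ∀ ⦃x y⦄, M.Adj x y → (x ∈ s ↔ y ∉ s)) :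
    (M.verts ∩ s).ncard = (M.verts \ s).ncard := by
  refine le_antisymm (hM.ncard_le_ncard_of_forall_exists_adj fun x ⟨hx, hxs⟩ => ?_)
    (hM.ncard_le_ncard_of_forall_exists_adj fun x ⟨hx, hxs⟩ => ?_)
  all_goals
    obtain ⟨y, hxy, -⟩ := hM hx
    have := hs hxy
    exact ⟨y, ⟨M.edge_vert hxy.symm, by tauto⟩, hxy⟩

lemma IsMatching.exists_exchange (hM : M.IsMatching) (hxy : M.Adj x y) (hax : H.Adj a x)
    (ha : a ∉ M.verts) :
    ∃ M' : H.Subgraph, M'.IsMatching ∧ M'.verts = insert a (M.verts \ {y}) ∧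
      ∀ ⦃s t⦄, M.Adj s t → s ≠ x → s ≠ y → M'.Adj s t := by
  have hpair : ∀ ⦃v w⦄, M.Adj v w → v ∈ ({x, y} : Set V) → w ∈ ({x, y} : Set V) := by
    rintro v w hvw (rfl | rfl)
    · exact Or.inr (hM.eq_of_adj_left hvw hxy)
    · exact Or.inl (hM.eq_of_adj_left hvw hxy.symm)
  refine ⟨M.deleteVerts {x, y} ⊔ H.subgraphOfAdj hax,
    (hM.deleteVerts hpair).sup (.subgraphOfAdj hax) ?_, ?_, fun s t hst hsx hsy => ?_⟩
  · rw [(hM.deleteVerts hpair).support_eq_verts, (IsMatching.subgraphOfAdj hax).support_eq_verts]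
    simp [ha]
  · have hx := M.edge_vert hxy
    have hxy' : x ≠ y := (M.adj_sub hxy).ne
    ext v
    simp only [verts_sup, deleteVerts_verts, subgraphOfAdj_verts, mem_union, mem_sdiff,
      mem_insert_iff, mem_singleton_iff]
    grind
  · have hs : s ∉ ({x, y} : Set V) := by simp [hsx, hsy]
    exact Or.inl (deleteVerts_adj.2 ⟨M.edge_vert hst, hs, M.edge_vert hst.symm,
      fun ht => hs (hpair hst.symm ht), hst⟩)

/-- Only meaningful for finite `V`, since `ncard` vanishes on infinite sets. -/
def IsMaximumMatching (M : H.Subgraph) : Prop :=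
  M.IsMatching ∧ ∀ M' : H.Subgraph, M'.IsMatching → M'.verts.ncard ≤ M.verts.ncard

lemma exists_isMaximumMatching [Finite V] (H : SimpleGraph V) :
    ∃ M : H.Subgraph, M.IsMaximumMatching := by
  have hbot : (⊥ : H.Subgraph).IsMatching := fun v hv => absurd hv (by simp)
  obtain ⟨M, hM, hmax⟩ := exists_max_image {M : H.Subgraph | M.IsMatching}
    (fun M => M.verts.ncard) (toFinite _) ⟨⊥, hbot⟩
  exact ⟨M, hM, hmax⟩

lemma IsMaximumMatching.exists_exchange (hM : M.IsMaximumMatching) (hxy : M.Adj x y)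
    (hax : H.Adj a x) (ha : a ∉ M.verts) :
    ∃ M' : H.Subgraph, M'.IsMaximumMatching ∧ M'.verts = insert a (M.verts \ {y}) ∧
      ∀ ⦃s t⦄, M.Adj s t → s ≠ x → s ≠ y → M'.Adj s t := by
  obtain ⟨M', hM', hverts, hpres⟩ := hM.1.exists_exchange hxy hax ha
  refine ⟨M', ⟨hM', fun M'' hM'' => ?_⟩, hverts, hpres⟩
  rw [hverts, ncard_exchange ha (M.edge_vert hxy.symm)]
  exact hM.2 M'' hM''

variable [Finite V]

lemma IsMaximumMatching.not_adj (hM : M.IsMaximumMatching) (ha : a ∉ M.verts)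
    (hb : b ∉ M.verts) : ¬ H.Adj a b := fun hab => by
  have hdisj : Disjoint M.support (H.subgraphOfAdj hab).support := by
    rw [hM.1.support_eq_verts, (IsMatching.subgraphOfAdj hab).support_eq_verts]
    simp [ha, hb]
  have hle := hM.2 _ (hM.1.sup (.subgraphOfAdj hab) hdisj)
  rw [verts_sup, subgraphOfAdj_verts, union_insert, union_singleton,
    ncard_insert_of_notMem (by simp [hab.ne, ha]), ncard_insert_of_notMem hb] at hle
  omega

lemma IsMaximumMatching.not_adj_and_adj (hM : M.IsMaximumMatching) (hxy : M.Adj x y)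
    (ha : a ∉ M.verts) (hb : b ∉ M.verts) (hab : a ≠ b) : ¬ (H.Adj a x ∧ H.Adj b y) := by
  rintro ⟨hax, hby⟩
  obtain ⟨M', hM', hverts, -⟩ := hM.exists_exchange hxy hax ha
  have hay : a ≠ y := fun h => ha (h ▸ M.edge_vert hxy.symm)
  exact hM'.not_adj (a := b) (b := y) (by simp [hverts, hab.symm, hb])
    (by simp [hverts, hay.symm]) hby

section Bichromatic

variable {G : SimpleGraph V} {c : V → ι} {M : (G.bichromatic c).Subgraph}
  {u w a q q' : V}

lemma IsMaximumMatching.color_eq_of_notMem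
    (hδ : ∀ v, 3 * Nat.card V ≤ 4 * (G.neighborSet v).ncard) (hM : M.IsMaximumMatching)
    (hu : u ∉ M.verts) (hw : w ∉ M.verts) : c u = c w := by
  by_contra hc
  have huw : u ≠ w := fun h => hc (congrArg c h)
  set S := G.neighborSet u ∩ G.neighborSet w
  have hS : Nat.card V ≤ 2 * S.ncard := le_two_mul_ncard_inter_neighborSet (hδ u) (hδ w)
  by_cases hSM : S ⊆ M.verts
  · have hcard := ncard_le_card (insert u (insert w M.verts))
    rw [ncard_insert_of_notMem (by simp [huw, hu]), ncard_insert_of_notMem hw] at hcard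
    obtain ⟨x, hx, y, hy, hxy⟩ := hM.1.exists_adj_of_ncard_verts_lt hSM (by omega)
    have hcxy : c x ≠ c y := (bichromatic_adj.1 (M.adj_sub hxy)).2
    by_cases h : c u ≠ c x ∧ c w ≠ c y
    · exact hM.not_adj_and_adj hxy hu hw huw
        ⟨bichromatic_adj.2 ⟨hx.1, h.1⟩, bichromatic_adj.2 ⟨hy.2, h.2⟩⟩
    · have h' : c w ≠ c x ∧ c u ≠ c y := by grind
      exact hM.not_adj_and_adj hxy hw hu huw.symm
        ⟨bichromatic_adj.2 ⟨hx.2, h'.1⟩, bichromatic_adj.2 ⟨hy.1, h'.2⟩⟩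
  · obtain ⟨x, hx, hxM⟩ := not_subset.1 hSM
    by_cases hux : c u = c x
    · exact hM.not_adj hw hxM (bichromatic_adj.2 ⟨hx.2, fun h => hc (hux.trans h.symm)⟩)
    · exact hM.not_adj hu hxM (bichromatic_adj.2 ⟨hx.1, hux⟩)

lemma IsMaximumMatching.exists_adj_color_ne
    (hδ : ∀ v, 3 * Nat.card V ≤ 4 * (G.neighborSet v).ncard)
    (hc : ∀ i, 2 * (c ⁻¹' {i}).ncard ≤ Nat.card V) (hM : M.IsMaximumMatching)
    (hu : u ∉ M.verts) : ∃ q q', M.Adj q q' ∧ c q ≠ c u ∧ c q' ≠ c u := by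
  by_contra! h
  -- Every edge of `M` would have exactly one endpoint in `C`, so `C` would contain half of
  -- `M.verts` together with all uncovered vertices: more than `n/2` vertices.
  set C := c ⁻¹' {c u}
  have hbal : (M.verts ∩ C).ncard = (M.verts \ C).ncard :=
    hM.1.ncard_inter_eq_ncard_sdiff fun x y hxy => by
      have hcxy := (bichromatic_adj.1 (M.adj_sub hxy)).2
      have := h x y hxy
      simp only [C, mem_preimage, mem_singleton_iff]
      grind
  have hsplit := ncard_inter_add_ncard_sdiff_eq_ncard M.verts C
  have hcompl := ncard_add_ncard_compl M.verts
  have hpos : 0 < M.vertsᶜ.ncard := (ncard_pos (toFinite _)).2 ⟨u, hu⟩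
  have hdisj : Disjoint (M.verts ∩ C) M.vertsᶜ :=
    disjoint_compl_right.mono_left inter_subset_left
  have hsub : (M.verts ∩ C) ∪ M.vertsᶜ ⊆ C :=
    union_subset inter_subset_right fun v hv => hM.color_eq_of_notMem hδ hv hu
  have hC := ncard_le_ncard hsub
  rw [ncard_union_eq hdisj] at hC
  have hCn : 2 * C.ncard ≤ Nat.card V := hc (c u)
  omega

lemma IsMaximumMatching.not_adj_of_notMem
    (hδ : ∀ v, 3 * Nat.card V ≤ 4 * (G.neighborSet v).ncard) (hM : M.IsMaximumMatching)
    (ha : a ∉ M.verts) (hw : w ∉ M.verts) (haw : a ≠ w) (hqq' : M.Adj q q')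
    (hq : c q ≠ c a) (hq' : c q' ≠ c a) : ¬ G.Adj q a := fun hqa => by
  obtain ⟨M', hM', hverts, -⟩ :=
    hM.exists_exchange hqq' (bichromatic_adj.2 ⟨hqa.symm, hq.symm⟩) ha
  have haq' : a ≠ q' := fun h => ha (h ▸ M.edge_vert hqq'.symm)
  refine hq' (hM'.color_eq_of_notMem hδ (w := w) (by simp [hverts, haq'.symm]) ?_ |>.trans ?_)
  · simp [hverts, haw.symm, hw]
  · exact hM.color_eq_of_notMem hδ hw ha

lemma IsMaximumMatching.exists_adj_color_eq_not_adj
    (hδ : ∀ v, 3 * Nat.card V ≤ 4 * (G.neighborSet v).ncard) (hM : M.IsMaximumMatching)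
    (hu : u ∉ M.verts) (hw : w ∉ M.verts) (huw : u ≠ w) (hqq' : M.Adj q q')
    (hq : c q ≠ c u) (hq' : c q' ≠ c u) {y : V} (hy : (G.bichromatic c).Adj u y) :
    ∃ y', M.Adj y y' ∧ c y' = c u ∧ ¬ G.Adj q y' := by
  have hyM : y ∈ M.verts := by
    by_contra hyM
    exact hM.not_adj hu hyM hy
  obtain ⟨y', hyy', -⟩ := hM.1 hyM
  have hy'M : y' ∈ M.verts := M.edge_vert hyy'.symm
  -- exchanging `y y'` for `u y` uncovers `y'`
  obtain ⟨M₁, hM₁, hverts, hpres⟩ := hM.exists_exchange hyy' hy hu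
  have hy'u : y' ≠ u := fun h => hu (h ▸ hy'M)
  have hy'₁ : y' ∉ M₁.verts := by simp [hverts, hy'u]
  have hw₁ : w ∉ M₁.verts := by simp [hverts, huw.symm, hw]
  have hcy' : c y' = c u :=
    (hM₁.color_eq_of_notMem hδ hy'₁ hw₁).trans (hM.color_eq_of_notMem hδ hw hu)
  have hqy' : q ≠ y' := fun h => hq (h ▸ hcy')
  have hqy : q ≠ y := fun h => hq' (hM.1.eq_of_adj_left hqq' (h ▸ hyy') ▸ hcy')
  refine ⟨y', hyy', hcy', hM₁.not_adj_of_notMem hδ hy'₁ hw₁ ?_ (hpres hqq' hqy hqy')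
    (hcy' ▸ hq) (hcy' ▸ hq')⟩
  exact fun h => hw (h ▸ hy'M)

lemma IsMaximumMatching.ncard_neighborSet_add_ncard_neighborSet_add_two_le
    (hδ : ∀ v, 3 * Nat.card V ≤ 4 * (G.neighborSet v).ncard) (hM : M.IsMaximumMatching)
    (hu : u ∉ M.verts) (hw : w ∉ M.verts) (huw : u ≠ w) (hqq' : M.Adj q q')
    (hq : c q ≠ c u) (hq' : c q' ≠ c u) :
    ((G.bichromatic c).neighborSet u).ncard + (G.neighborSet q).ncard + 2 ≤ Nat.card V := by
  have huq : u ≠ q := fun h => hu (h ▸ M.edge_vert hqq')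
  have hqu : ¬ G.Adj q u := hM.not_adj_of_notMem hδ hu hw huw hqq' hq hq'
  set T := insert u (insert q (G.neighborSet q))
  have hT : T.ncard = (G.neighborSet q).ncard + 2 := by
    rw [ncard_insert_of_notMem (by simp [huq, hqu]), ncard_insert_of_notMem (by simp)]
  -- the partners of the bichromatic neighbours of `u` avoid `T`
  have hN : ((G.bichromatic c).neighborSet u).ncard ≤ Tᶜ.ncard :=
    hM.1.ncard_le_ncard_of_forall_exists_adj fun y hy => by
      obtain ⟨y', hyy', hcy', hqy'⟩ :=
        hM.exists_adj_color_eq_not_adj hδ hu hw huw hqq' hq hq' hy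
      refine ⟨y', ?_, hyy'⟩
      have hy'u : y' ≠ u := fun h => hu (h ▸ M.edge_vert hyy'.symm)
      have hy'q : y' ≠ q := fun h => hq (h ▸ hcy')
      simp [T, hy'u, hy'q, hqy']
  have := ncard_add_ncard_compl T
  omega

lemma IsMaximumMatching.eq_of_notMem
    (hδ : ∀ v, 3 * Nat.card V ≤ 4 * (G.neighborSet v).ncard)
    (hc : ∀ i, 2 * (c ⁻¹' {i}).ncard ≤ Nat.card V) (hM : M.IsMaximumMatching)
    (hu : u ∉ M.verts) (hw : w ∉ M.verts) : u = w := by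
  by_contra huw
  obtain ⟨q, q', hqq', hq, hq'⟩ := hM.exists_adj_color_ne hδ hc hu
  have := hM.ncard_neighborSet_add_ncard_neighborSet_add_two_le hδ hu hw huw hqq' hq hq'
  have := G.ncard_neighborSet_le_ncard_neighborSet_bichromatic_add c u
  have := hδ u
  have := hδ q
  have := hc (c u)
  omega

end Bichromatic

end Subgraph

theorem exists_isPerfectMatching_bichromatic [Finite V] (G : SimpleGraph V) (c : V → ι)
    (hev : Even (Nat.card V)) (hδ : ∀ v, 3 * Nat.card V ≤ 4 * (G.neighborSet v).ncard)
    (hc : ∀ i, 2 * (c ⁻¹' {i}).ncard ≤ Nat.card V) :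
    ∃ M : (G.bichromatic c).Subgraph, M.IsPerfectMatching := by
  obtain ⟨M, hM⟩ := Subgraph.exists_isMaximumMatching (G.bichromatic c)
  refine ⟨M, hM.1, fun v => ?_⟩
  by_contra hv
  have hcompl : M.vertsᶜ = {v} :=
    eq_singleton_iff_unique_mem.2 ⟨hv, fun w hw => hM.eq_of_notMem hδ hc hw hv⟩
  have heven := (even_ncard_compl_iff hev M.verts).2 hM.1.even_ncard_verts
  rw [hcompl, ncard_singleton] at heven
  exact Nat.not_even_one heven

end SimpleGraph

open SimpleGraph

theorem lemma_pureconnectedmatching_red_general {V : Type} [Fintype V]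
    (G G₁ G₂ : SimpleGraph V) (n : ℕ) (hn : Fintype.card V = n) (hev : Even n)
    (hδ : ∀ v : V, (3 : ℝ) / 4 * n ≤ ((G.neighborSet v).ncard : ℝ))
    (hcol : G₁ ⊔ G₂ = G)
    (hcomp : ∀ c : G₂.ConnectedComponent, ((c.supp.ncard : ℝ)) ≤ n / 2) :
    ∃ M : G₁.Subgraph, M.IsPerfectMatching ∧
      ∀ u v : V, M.Adj u v →
        G₂.connectedComponentMk u ≠ G₂.connectedComponentMk v := by
  rw [← Nat.card_eq_fintype_card] at hn
  subst hn
  obtain ⟨M, hM⟩ := exists_isPerfectMatching_bichromatic G G₂.connectedComponentMk hev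
    (fun v => by
      have := hδ v
      exact_mod_cast (by linarith : (3 * Nat.card V : ℝ) ≤ 4 * (G.neighborSet v).ncard))
    (fun C => by
      have := hcomp C
      exact_mod_cast (by linarith : (2 * C.supp.ncard : ℝ) ≤ Nat.card V))
  have hle := bichromatic_connectedComponentMk_le hcol.ge
  refine ⟨M.map (Hom.ofLE hle), ⟨hM.1.map_ofLE hle, fun v => by simpa using hM.2 v⟩, ?_⟩
  rintro u v ⟨u, v, huv, rfl, rfl⟩
  exact (bichromatic_adj.1 (M.adj_sub huv)).2

/-- let `G` be a graph on an even number `n` of vertices with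
`δ(G) ≥ 3n/4` and a 2-multicoloring `E(G) = E₁ ∪ E₂` (i.e. `G₁ ⊔ G₂ = G`).  If `G₁` is
connected (its unique component spans `V(G)`) and every connected component of `G₂` has
at most `n/2` vertices, then `G₁` has a perfect matching each of whose edges joins two
distinct components of `G₂`. -/
theorem lemma_pureconnectedmatching_red {V : Type} [Fintype V]
    (G G₁ G₂ : SimpleGraph V) (n : ℕ) (hn : Fintype.card V = n) (hev : Even n)
    (hδ : ∀ v : V, (3 : ℝ) / 4 * n ≤ ((G.neighborSet v).ncard : ℝ))
    (hcol : G₁ ⊔ G₂ = G)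
    (hconn : G₁.Connected)
    (hcomp : ∀ c : G₂.ConnectedComponent, ((c.supp.ncard : ℝ)) ≤ n / 2) :
    ∃ M : G₁.Subgraph, M.IsPerfectMatching ∧
      ∀ u v : V, M.Adj u v →
        G₂.connectedComponentMk u ≠ G₂.connectedComponentMk v :=
  lemma_pureconnectedmatching_red_general G G₁ G₂ n hn hev hδ hcol hcomp
end

section
/- Let G be a graph on n vertices (n even) with δ(G) ≥ 3n/4, and let E(G) = E₁ ∪ E₂ be a 2-multicoloring of its edges. Suppose H₁ is a connected component of G₁ and H₂ is a connected component of G₂ with |V(H₁)| ≥ 3n/4, |V(H₂)| ≥ 3n/4, and V(G) = V(H₁) ∪ V(H₂). Then G contains a perfect matching M with M ⊆ E(H₁) ∪ E(H₂). -/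
/-!
Let `H` be the graph formed by the `G₁`-edges inside `C₁` and the `G₂`-edges inside `C₂`. Passing
from `G` to `H`, a vertex `v ∈ C₁` loses only `G₂`-edges leaving `C₂`, i.e. at most
`n - |C₂| ≤ n / 4` of them, so `δ(H) ≥ 3n/4 - n/4 = n/2` (symmetrically for `v ∈ C₂`).

A graph of even order `n` with `δ ≥ n/2` has a perfect matching: if `u` is unmatched in a maximum
matching, parity gives a second unmatched vertex `v`, all neighbours of `u` and `v` are matched,
and `deg u + deg v ≥ n` exceeds the number of matched vertices, so some matching edge `xy` has
`u ~ x` and `v ~ y`; replacing `xy` by `ux, vy` enlarges the matching.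
-/

open Finset Equiv

lemma Equiv.Perm.mul_swap_sq_eq_one {α : Type*} [DecidableEq α] {σ : Perm α} {a b : α}
    (hσ : σ ^ 2 = 1) (hab : swap (σ a) (σ b) = swap a b) : (σ * swap a b) ^ 2 = 1 := by
  have hcomm : σ * swap a b = swap a b * σ := by rw [mul_swap_eq_swap_mul, hab]
  rw [sq, mul_assoc, ← mul_assoc (swap a b), ← hcomm, mul_assoc, swap_mul_self, mul_one, ← sq, hσ]

namespace SimpleGraph

section MatchingInvolution

variable {V : Type*} [Fintype V] [DecidableEq V] {H : SimpleGraph V} {σ : Perm V} {a b : V}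

/-- A matching encoded as an involution swapping matched vertices with their partners. -/
def IsMatchingInvolution (H : SimpleGraph V) (σ : Perm V) : Prop :=
  σ ^ 2 = 1 ∧ ∀ v ∈ σ.support, H.Adj v (σ v)

namespace IsMatchingInvolution

lemma one : H.IsMatchingInvolution 1 := ⟨one_pow 2, by simp⟩

lemma apply_apply (hσ : H.IsMatchingInvolution σ) (v : V) : σ (σ v) = v := by
  simpa [sq] using congr($(hσ.1) v)

lemma exists_isFixedPt_ne (hσ : H.IsMatchingInvolution σ) (hev : Even (Fintype.card V))
    (ha : σ a = a) : ∃ b ≠ a, σ b = b := by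
  have hfix : Even #σ.supportᶜ := by
    rw [card_compl]
    exact hev.tsub (even_iff_two_dvd.2 (Perm.two_dvd_card_support hσ.1))
  have ha' : a ∈ σ.supportᶜ := by simpa using ha
  have hpos : 0 < #σ.supportᶜ := card_pos.2 ⟨a, ha'⟩
  obtain ⟨b, hb, hba⟩ := exists_mem_ne (s := σ.supportᶜ) (by obtain ⟨k, hk⟩ := hfix; omega) a
  exact ⟨b, hba, by simpa using hb⟩

lemma mul_swap_of_adj (hσ : H.IsMatchingInvolution σ) (ha : σ a = a) (hb : σ b = b)
    (hab : H.Adj a b) : H.IsMatchingInvolution (σ * swap a b) := by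
  refine ⟨Perm.mul_swap_sq_eq_one hσ.1 (by rw [ha, hb]), fun c hc => ?_⟩
  rw [Perm.mem_support] at hc
  by_cases hca : c = a
  · subst hca; simpa [hb] using hab
  by_cases hcb : c = b
  · subst hcb; simpa [ha] using hab.symm
  simp only [Perm.mul_apply, swap_apply_of_ne_of_ne hca hcb] at hc ⊢
  exact hσ.2 c (Perm.mem_support.2 hc)

lemma mul_swap_apply (hσ : H.IsMatchingInvolution σ) (a : V) :
    H.IsMatchingInvolution (σ * swap a (σ a)) := by
  refine ⟨Perm.mul_swap_sq_eq_one hσ.1 (by rw [hσ.apply_apply, swap_comm]), fun c hc => ?_⟩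
  rw [Perm.mem_support] at hc
  by_cases hca : c = a
  · subst hca; simp [hσ.apply_apply] at hc
  by_cases hcb : c = σ a
  · subst hcb; simp at hc
  simp only [Perm.mul_apply, swap_apply_of_ne_of_ne hca hcb] at hc ⊢
  exact hσ.2 c (Perm.mem_support.2 hc)

lemma support_mul_swap (ha : σ a = a) (hb : σ b = b) (hab : a ≠ b) :
    (σ * swap a b).support = σ.support ∪ {a, b} := by
  rw [Perm.Disjoint.support_mul, Perm.support_swap hab]
  intro c
  by_cases hc : c = a ∨ c = b
  · rcases hc with rfl | rfl <;> simp [*]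
  · push Not at hc; exact Or.inr (swap_apply_of_ne_of_ne hc.1 hc.2)

lemma support_mul_swap_apply (hσ : H.IsMatchingInvolution σ) (a : V) :
    (σ * swap a (σ a)).support = σ.support \ {a, σ a} := by
  ext c
  by_cases hca : c = a
  · subst hca; simp [hσ.apply_apply]
  by_cases hcb : c = σ a
  · subst hcb; simp
  simp [swap_apply_of_ne_of_ne hca hcb, hca, hcb]

def toSubgraph (hσ : H.IsMatchingInvolution σ) : H.Subgraph where
  verts := σ.support
  Adj a b := a ∈ σ.support ∧ σ a = b
  adj_sub := by rintro a _ ⟨ha, rfl⟩; exact hσ.2 a ha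
  edge_vert := And.left
  symm := ⟨by rintro a _ ⟨ha, rfl⟩; exact ⟨Perm.apply_mem_support.2 ha, hσ.apply_apply a⟩⟩

lemma isPerfectMatching_toSubgraph (hσ : H.IsMatchingInvolution σ) (h : σ.support = univ) :
    hσ.toSubgraph.IsPerfectMatching :=
  ⟨fun v hv => ⟨σ v, ⟨hv, rfl⟩, fun _ h => h.2.symm⟩, fun v => by simp [toSubgraph, h]⟩

lemma exists_card_support_lt_of_adj (hσ : H.IsMatchingInvolution σ) (ha : σ a = a)
    (hb : σ b = b) (hab : H.Adj a b) :
    ∃ τ, H.IsMatchingInvolution τ ∧ #σ.support < #τ.support := by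
  refine ⟨_, hσ.mul_swap_of_adj ha hb hab, card_lt_card ?_⟩
  rw [support_mul_swap ha hb hab.ne]
  exact ssubset_iff_of_subset subset_union_left |>.2 ⟨a, by simp, by simpa using ha⟩

/-- Replacing the matching edge `x (σ x)` by `u x` and `v (σ x)`. -/
lemma exists_card_support_lt_of_exchange (hσ : H.IsMatchingInvolution σ) {u v x : V}
    (hu : σ u = u) (hv : σ v = v) (huv : u ≠ v) (hx : σ x ≠ x) (hux : H.Adj u x)
    (hvy : H.Adj v (σ x)) :
    ∃ τ, H.IsMatchingInvolution τ ∧ #σ.support < #τ.support := by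
  set y := σ x with hy
  have hyx : σ y = x := hσ.apply_apply x
  have hxy : x ≠ y := Ne.symm hx
  have hux_ne : u ≠ x := hux.ne
  have huy : u ≠ y := fun h => hxy (by rw [← hyx, ← h, hu])
  have hvx : v ≠ x := fun h => hx (by rw [hy, ← h, hv])
  have hvy_ne : v ≠ y := hvy.ne
  set ρ := σ * swap x y
  have hρ : H.IsMatchingInvolution ρ := hσ.mul_swap_apply x
  have hρu : ρ u = u := by simp [ρ, swap_apply_of_ne_of_ne hux_ne huy, hu]
  have hρv : ρ v = v := by simp [ρ, swap_apply_of_ne_of_ne hvx hvy_ne, hv]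
  have hρx : ρ x = x := by simp [ρ, hyx]
  have hρy : ρ y = y := by simp only [ρ, Perm.mul_apply, swap_apply_right]; exact hy.symm
  set ρ' := ρ * swap u x
  have hρ' : H.IsMatchingInvolution ρ' := hρ.mul_swap_of_adj hρu hρx hux
  have hρ'v : ρ' v = v := by simp [ρ', swap_apply_of_ne_of_ne huv.symm hvx, hρv]
  have hρ'y : ρ' y = y := by simp [ρ', swap_apply_of_ne_of_ne huy.symm hxy.symm, hρy]
  refine ⟨ρ' * swap v y, hρ'.mul_swap_of_adj hρ'v hρ'y hvy, card_lt_card ?_⟩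
  rw [support_mul_swap hρ'v hρ'y hvy_ne, support_mul_swap hρu hρx hux_ne, support_mul_swap_apply hσ]
  refine ssubset_iff_of_subset (fun c hc => ?_) |>.2 ⟨u, by simp, by simpa using hu⟩
  by_cases hcx : c = x <;> by_cases hcy : c = y <;> simp [hc, hcx, hcy, ← hy]

lemma exists_card_support_lt [DecidableRel H.Adj] (hσ : H.IsMatchingInvolution σ)
    (hev : Even (Fintype.card V)) (hdeg : ∀ v, Fintype.card V ≤ 2 * H.degree v) {u : V}
    (hu : σ u = u) : ∃ τ, H.IsMatchingInvolution τ ∧ #σ.support < #τ.support := by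
  by_cases hfree : ∃ w, H.Adj u w ∧ σ w = w
  · obtain ⟨w, huw, hw⟩ := hfree
    exact hσ.exists_card_support_lt_of_adj hu hw huw
  push Not at hfree
  obtain ⟨v, hvu, hv⟩ := hσ.exists_isFixedPt_ne hev hu
  -- pigeonhole: some neighbour `x` of `u` has its partner `σ x` adjacent to `v`
  obtain ⟨x, hx⟩ : (H.neighborFinset u ∩ (H.neighborFinset v).map σ.toEmbedding).Nonempty := by
    refine inter_nonempty_of_card_lt_card_add_card (s := univ.erase u) ?_ ?_ ?_
    · intro w hw
      exact mem_erase.2 ⟨((mem_neighborFinset _ _ _).1 hw).ne', mem_univ _⟩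
    · intro w hw
      obtain ⟨z, hz, rfl⟩ := mem_map.1 hw
      refine mem_erase.2 ⟨fun h => ?_, mem_univ _⟩
      have hzu : z = u := σ.injective (by simpa [hu] using h)
      exact hfree v (hzu ▸ (mem_neighborFinset _ _ _).1 hz).symm hv
    · have := hdeg u
      have := hdeg v
      rw [card_map, card_neighborFinset_eq_degree, card_neighborFinset_eq_degree,
        card_erase_of_mem (mem_univ u), card_univ]
      have : 0 < Fintype.card V := Fintype.card_pos_iff.2 ⟨u⟩
      omega
  simp only [mem_inter, mem_neighborFinset, mem_map, Equiv.toEmbedding_apply] at hx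
  obtain ⟨hux, z, hvz, rfl⟩ := hx
  exact hσ.exists_card_support_lt_of_exchange hu hv hvu.symm (hfree _ hux) hux
    (by rwa [hσ.apply_apply])

end IsMatchingInvolution

end MatchingInvolution

theorem exists_isPerfectMatching_of_card_le_two_mul_degree {V : Type*} [Fintype V]
    {H : SimpleGraph V} [DecidableRel H.Adj] (hev : Even (Fintype.card V))
    (hdeg : ∀ v, Fintype.card V ≤ 2 * H.degree v) : ∃ M : H.Subgraph, M.IsPerfectMatching := by
  classical
  obtain ⟨σ, hσ, hmax⟩ := exists_max_image ({σ | H.IsMatchingInvolution σ} : Finset (Perm V))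
    (fun σ => #σ.support) ⟨1, by simpa using IsMatchingInvolution.one⟩
  rw [mem_filter_univ] at hσ
  refine ⟨_, hσ.isPerfectMatching_toSubgraph (eq_univ_of_forall fun u => by_contra fun hu => ?_)⟩
  obtain ⟨τ, hτ, hlt⟩ := hσ.exists_card_support_lt hev hdeg (Perm.notMem_support.1 hu)
  exact (hmax τ (by simpa using hτ)).not_gt hlt

section Components

variable {V : Type*} {G₁ G₂ : SimpleGraph V}

def ConnectedComponent.spanningGraph {G : SimpleGraph V} (C : G.ConnectedComponent) :
    SimpleGraph V where
  Adj u v := G.Adj u v ∧ u ∈ C.supp ∧ v ∈ C.supp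
  symm := ⟨fun _ _ ⟨h, hu, hv⟩ => ⟨h.symm, hv, hu⟩⟩
  loopless := ⟨fun _ h => h.1.ne rfl⟩

lemma ConnectedComponent.spanningGraph_le {G : SimpleGraph V} (C : G.ConnectedComponent) :
    C.spanningGraph ≤ G :=
  fun _ _ h => h.1

lemma neighborSet_sup_subset {C₁ : G₁.ConnectedComponent} (C₂ : G₂.ConnectedComponent) {v : V}
    (hv : v ∈ C₁.supp) :
    (G₁ ⊔ G₂).neighborSet v ⊆
      (C₁.spanningGraph ⊔ C₂.spanningGraph).neighborSet v ∪ C₂.suppᶜ := by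
  rintro w (h | h)
  · exact Or.inl (Or.inl ⟨h, hv, C₁.mem_supp_of_adj_mem_supp hv h⟩)
  · by_cases hw : w ∈ C₂.supp
    · exact Or.inl (Or.inr ⟨h, (C₂.mem_supp_congr_adj h).2 hw, hw⟩)
    · exact Or.inr hw

lemma ncard_neighborSet_sup_add_ncard_supp_le [Finite V] {C₁ : G₁.ConnectedComponent}
    (C₂ : G₂.ConnectedComponent) {v : V} (hv : v ∈ C₁.supp) :
    ((G₁ ⊔ G₂).neighborSet v).ncard + C₂.supp.ncard ≤
      ((C₁.spanningGraph ⊔ C₂.spanningGraph).neighborSet v).ncard + Nat.card V := by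
  have hsub := Set.ncard_le_ncard (neighborSet_sup_subset C₂ hv)
  have hunion := Set.ncard_union_le ((C₁.spanningGraph ⊔ C₂.spanningGraph).neighborSet v) C₂.suppᶜ
  have hcompl := Set.ncard_add_ncard_compl C₂.supp
  omega

lemma ncard_neighborSet_sup_add_min_le [Finite V] (C₁ : G₁.ConnectedComponent)
    (C₂ : G₂.ConnectedComponent) (hcov : C₁.supp ∪ C₂.supp = Set.univ) (v : V) :
    ((G₁ ⊔ G₂).neighborSet v).ncard + min C₁.supp.ncard C₂.supp.ncard ≤
      ((C₁.spanningGraph ⊔ C₂.spanningGraph).neighborSet v).ncard + Nat.card V := by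
  rcases (hcov ▸ Set.mem_univ v : v ∈ C₁.supp ∪ C₂.supp) with hv | hv
  · have := ncard_neighborSet_sup_add_ncard_supp_le C₂ hv
    have := min_le_right C₁.supp.ncard C₂.supp.ncard
    omega
  · have := ncard_neighborSet_sup_add_ncard_supp_le C₁ hv
    rw [sup_comm, sup_comm C₂.spanningGraph] at this
    have := min_le_left C₁.supp.ncard C₂.supp.ncard
    omega

end Components

end SimpleGraph

open SimpleGraph

/-- let `G` be a graph on an even number `n` of vertices with
`δ(G) ≥ 3n/4` and a 2-multicoloring `E(G) = E₁ ∪ E₂` (i.e. `G₁ ⊔ G₂ = G`).  If `H₁` is a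
component of `G₁` and `H₂` is a component of `G₂` with `|V(H₁)|, |V(H₂)| ≥ 3n/4` and
`V(G) = V(H₁) ∪ V(H₂)`, then `G` has a perfect matching `M ⊆ E(H₁) ∪ E(H₂)`. -/
theorem lemma_pureconnectedmatching {V : Type} [Fintype V]
    (G G₁ G₂ : SimpleGraph V) (n : ℕ) (hn : Fintype.card V = n) (hev : Even n)
    (hδ : ∀ v : V, (3 : ℝ) / 4 * n ≤ ((G.neighborSet v).ncard : ℝ))
    (hcol : G₁ ⊔ G₂ = G)
    (C₁ : G₁.ConnectedComponent) (C₂ : G₂.ConnectedComponent)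
    (h1 : (3 : ℝ) / 4 * n ≤ (C₁.supp.ncard : ℝ))
    (h2 : (3 : ℝ) / 4 * n ≤ (C₂.supp.ncard : ℝ))
    (hcov : C₁.supp ∪ C₂.supp = Set.univ) :
    ∃ M : G.Subgraph, M.IsPerfectMatching ∧
      ∀ u v : V, M.Adj u v →
        (G₁.Adj u v ∧ u ∈ C₁.supp ∧ v ∈ C₁.supp) ∨
        (G₂.Adj u v ∧ u ∈ C₂.supp ∧ v ∈ C₂.supp) := by
  classical
  set H := C₁.spanningGraph ⊔ C₂.spanningGraph
  have hHG : H ≤ G := hcol ▸ sup_le_sup C₁.spanningGraph_le C₂.spanningGraph_le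
  have hdeg : ∀ v, Fintype.card V ≤ 2 * H.degree v := by
    intro v
    have hbound := ncard_neighborSet_sup_add_min_le C₁ C₂ hcov v
    rw [hcol, Set.ncard_eq_toFinset_card' (H.neighborSet v), ← neighborFinset_def,
      card_neighborFinset_eq_degree, Nat.card_eq_fintype_card, hn] at hbound
    have hbound' : ((G.neighborSet v).ncard : ℝ) + min (C₁.supp.ncard : ℝ) C₂.supp.ncard ≤
        H.degree v + n := by exact_mod_cast hbound
    have := hδ v
    have := le_min h1 h2
    rw [hn]
    exact_mod_cast (by linarith : (n : ℝ) ≤ 2 * H.degree v)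
  obtain ⟨M, hM⟩ := exists_isPerfectMatching_of_card_le_two_mul_degree (hn ▸ hev) hdeg
  exact ⟨G.toSubgraph M.spanningCoe (M.spanningCoe_le.trans hHG),
    (Subgraph.IsPerfectMatching.toSubgraph_iff _).2 hM, fun u v huv => M.adj_sub huv⟩
end

section
/- Let 0 < α ≤ η′/2 ≤ η/2 and let G be a graph on n vertices. Suppose H⁰ ⊆ G is an (η, α)-robust subgraph on n₀ vertices, and H^k is obtained from H⁰ by repeatedly adding a vertex of G outside the current subgraph having at least η′n neighbors inside, until no such vertex exists (adding k vertices in total). Then H^k is (η′, αη′τ)-robust, where τ = n₀/(n₀ + k). -/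
open Finset

namespace SimpleGraph

variable {V : Type*} (G : SimpleGraph V)

lemma nbrIn_eq_card_filter [DecidableRel G.Adj] (u : V) (S : Finset V) :
    nbrIn G u ↑S = #{w ∈ S | G.Adj u w} := by
  rw [nbrIn, ← Set.ncard_coe_finset]
  congr 1
  ext w
  simp [and_comm]

lemma nbrIn_mono (u : V) {S T : Finset V} (h : S ⊆ T) : nbrIn G u ↑S ≤ nbrIn G u ↑T := by
  classical
  simp only [nbrIn_eq_card_filter]
  exact card_le_card (filter_subset_filter _ h)

lemma nbrIn_le_card (u : V) (S : Finset V) : nbrIn G u ↑S ≤ #S := by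
  classical
  rw [nbrIn_eq_card_filter]
  exact card_filter_le _ _

lemma nbrIn_le_card_inter_add_nbrIn_sdiff [DecidableEq V] (u : V) {B C : Finset V}
    (X : Finset V) (hBC : B ⊆ C) : nbrIn G u ↑B ≤ #(B ∩ X) + nbrIn G u ↑(C \ X) := by
  classical
  simp only [nbrIn_eq_card_filter]
  calc #{w ∈ B | G.Adj u w} ≤ #(B ∩ X ∪ {w ∈ C \ X | G.Adj u w}) := by
        refine card_le_card fun w hw => ?_
        simp only [mem_filter] at hw
        by_cases hwX : w ∈ X <;> simp [hw, hwX, hBC hw.1]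
    _ ≤ _ := card_union_le _ _

lemma le_one_of_mul_card_le_nbrIn [Fintype V] {d : ℝ} {u : V} {S : Finset V}
    (h : d * Fintype.card V ≤ nbrIn G u ↑S) : d ≤ 1 := by
  have hpos : (0 : ℝ) < Fintype.card V := by exact_mod_cast Fintype.card_pos_iff.2 ⟨u⟩
  have hle : (nbrIn G u ↑S : ℝ) ≤ Fintype.card V := by
    exact_mod_cast (nbrIn_le_card G u S).trans (card_le_univ S)
  nlinarith

lemma eBetween_eq_card_interedges [DecidableRel G.Adj] (X Y : Finset V) :
    eBetween G ↑X ↑Y = #(G.interedges X Y) := by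
  rw [eBetween, ← Set.ncard_coe_finset]
  congr 1
  ext
  simp [mem_interedges_iff]

lemma eBetween_comm (X Y : Finset V) : eBetween G ↑X ↑Y = eBetween G ↑Y ↑X := by
  classical
  have := G.symm
  simp only [eBetween_eq_card_interedges]
  exact Rel.card_interedges_comm _ _

lemma eBetween_mono {X X' Y Y' : Finset V} (hX : X ⊆ X') (hY : Y ⊆ Y') :
    eBetween G ↑X ↑Y ≤ eBetween G ↑X' ↑Y' := by
  classical
  simp only [eBetween_eq_card_interedges]
  exact card_le_card (G.interedges_mono hX hY)

lemma eBetween_eq_sum_nbrIn (X Y : Finset V) : eBetween G ↑X ↑Y = ∑ u ∈ X, nbrIn G u ↑Y := by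
  classical
  simp only [eBetween_eq_card_interedges, nbrIn_eq_card_filter, interedges_def, card_filter,
    sum_product]

lemma card_mul_le_eBetween {S X Y : Finset V} {c : ℝ} (hSX : S ⊆ X)
    (hS : ∀ u ∈ S, c ≤ nbrIn G u ↑Y) : #S * c ≤ eBetween G ↑X ↑Y := by
  rw [eBetween_eq_sum_nbrIn]
  push_cast
  calc #S * c = ∑ _u ∈ S, c := by rw [sum_const, nsmul_eq_mul]
    _ ≤ ∑ u ∈ S, (nbrIn G u ↑Y : ℝ) := sum_le_sum hS
    _ ≤ ∑ u ∈ X, (nbrIn G u ↑Y : ℝ) :=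
        sum_le_sum_of_subset_of_nonneg hSX fun _ _ _ => by positivity

end SimpleGraph

section Arithmetic

variable {α η' m n x y : ℝ}

lemma div_add_mul_mul_le (hm : 0 ≤ m) (hx : 0 ≤ x) (hy : 0 ≤ y) (hn : x + y ≤ n) :
    m / (x + y) * x * y ≤ m * n / 4 := by
  rcases (add_nonneg hx hy).eq_or_lt with hxy | hxy
  · obtain rfl : x = 0 := by linarith
    have : 0 ≤ n := hy.trans (by linarith)
    simp only [mul_zero, zero_mul]
    positivity
  have hsq : x * y ≤ (x + y) * (x + y) / 4 := by nlinarith [sq_nonneg (x - y)]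
  calc m / (x + y) * x * y = m / (x + y) * (x * y) := by ring
    _ ≤ m / (x + y) * ((x + y) * (x + y) / 4) := by gcongr
    _ = m * (x + y) / 4 := by field_simp
    _ ≤ m * n / 4 := by gcongr

lemma div_add_mul_le (hm : 0 ≤ m) (hx : 0 ≤ x) (hy : 0 ≤ y) : m / (x + y) * y ≤ m := by
  rcases (add_nonneg hx hy).eq_or_lt with hxy | hxy
  · rw [← hxy, div_zero, zero_mul]
    exact hm
  rw [div_mul_eq_mul_div, div_le_iff₀ hxy]
  nlinarith

lemma mul_div_add_mul_mul_le_min (hα : 0 ≤ α) (hαη' : α ≤ η' / 2) (hη' : η' ≤ 1) (hm : 0 ≤ m)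
    (hmn : m ≤ n) (hx : 0 ≤ x) (hy : 0 ≤ y) (hn : x + y ≤ n) :
    α * η' * (m / (x + y)) * x * y ≤ min x (η' * n / 2) * (η' * n / 2) := by
  have hη'0 : 0 ≤ η' := by linarith
  rcases le_total x (η' * n / 2) with hxs | hxl
  · rw [min_eq_left hxs]
    have hτy : α * (m / (x + y) * y) ≤ n / 2 := by
      calc α * (m / (x + y) * y) ≤ η' / 2 * m := by
            gcongr
            exact div_add_mul_le hm hx hy
        _ ≤ 1 / 2 * n := by gcongr
        _ = n / 2 := by ring
    calc α * η' * (m / (x + y)) * x * y = η' * x * (α * (m / (x + y) * y)) := by ring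
      _ ≤ η' * x * (n / 2) := by gcongr
      _ = x * (η' * n / 2) := by ring
  · rw [min_eq_right hxl]
    have hn0 : 0 ≤ n := hm.trans hmn
    calc α * η' * (m / (x + y)) * x * y = α * η' * (m / (x + y) * x * y) := by ring
      _ ≤ α * η' * (m * n / 4) := by gcongr; exact div_add_mul_mul_le hm hx hy hn
      _ ≤ η' / 2 * η' * (n * n / 4) := by gcongr
      _ ≤ η' * n / 2 * (η' * n / 2) := by
          nlinarith [mul_nonneg (mul_nonneg hη'0 hη'0) (mul_nonneg hn0 hn0)]

lemma mul_div_add_mul_mul_le_of_le (hα : 0 ≤ α) (hη' : 0 ≤ η') {x₀ y₀ : ℝ}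
    (hx₀ : η' * n / 2 ≤ x₀) (hy₀ : η' * n / 2 ≤ y₀) (hx : 0 ≤ x) (hy : 0 ≤ y) (hn : x + y ≤ n) :
    α * η' * ((x₀ + y₀) / (x + y)) * x * y ≤ α * x₀ * y₀ := by
  have hn0 : 0 ≤ n := (add_nonneg hx hy).trans hn
  have hx₀0 : 0 ≤ x₀ := le_trans (by positivity) hx₀
  have hy₀0 : 0 ≤ y₀ := le_trans (by positivity) hy₀
  have hprod : η' * ((x₀ + y₀) * n / 4) ≤ x₀ * y₀ := by
    nlinarith [mul_nonneg (sub_nonneg.2 hx₀) (sub_nonneg.2 hy₀)]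
  calc α * η' * ((x₀ + y₀) / (x + y)) * x * y
        = α * (η' * ((x₀ + y₀) / (x + y) * x * y)) := by ring
    _ ≤ α * (η' * ((x₀ + y₀) * n / 4)) := by
        gcongr
        exact div_add_mul_mul_le (by positivity) hx hy hn
    _ ≤ α * x₀ * y₀ := by rw [mul_assoc]; gcongr

end Arithmetic

section GreedyExtension

variable {V : Type*} [DecidableEq V] {G : SimpleGraph V} {d : ℝ} {A : ℕ → Finset V} {v : ℕ → V}
  {k : ℕ}

/-- The vertex sets of an extension `H⁰ ⊆ ⋯ ⊆ H^k` in which every added vertex has at least `d`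
neighbours in the previous subgraph (`d = η'n` in the paper). -/
def IsGreedyExtension (G : SimpleGraph V) (d : ℝ) (A : ℕ → Finset V) (v : ℕ → V) (k : ℕ) :
    Prop :=
  ∀ i < k, v (i + 1) ∉ A i ∧ A (i + 1) = insert (v (i + 1)) (A i) ∧
    d ≤ (nbrIn G (v (i + 1)) ↑(A i) : ℝ)

namespace IsGreedyExtension

lemma subset_of_le (hA : IsGreedyExtension G d A v k) {i j : ℕ} (hij : i ≤ j) (hjk : j ≤ k) :
    A i ⊆ A j := by
  induction j, hij using Nat.le_induction with
  | base => exact Subset.rfl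
  | succ j _ ih =>
    rw [(hA j (by omega)).2.1]
    exact (ih (by omega)).trans (subset_insert _ _)

lemma card_eq (hA : IsGreedyExtension G d A v k) {j : ℕ} (hjk : j ≤ k) :
    #(A j) = #(A 0) + j := by
  induction j with
  | zero => rfl
  | succ j ih =>
    obtain ⟨hvA, hAsucc, -⟩ := hA j (by omega)
    rw [hAsucc, card_insert_of_notMem hvA, ih (by omega), add_assoc]

lemma card_add_card_sdiff_eq (hA : IsGreedyExtension G d A v k) {X : Finset V} (hX : X ⊆ A k) :
    #X + #(A k \ X) = #(A 0) + k := by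
  rw [add_comm, card_sdiff_add_card_eq_card hX, hA.card_eq le_rfl]

/-- Every vertex of `A j` has `d` neighbours in the set it was added to (`A 0` for the core). -/
lemma exists_le_nbrIn (hA : IsGreedyExtension G d A v k)
    (hcore : ∀ x ∈ A 0, d ≤ (nbrIn G x ↑(A 0) : ℝ)) {j : ℕ} (hjk : j ≤ k) {u : V} (hu : u ∈ A j) :
    ∃ s, (s = 0 ∨ s < j) ∧ d ≤ (nbrIn G u ↑(A s) : ℝ) := by
  induction j with
  | zero => exact ⟨0, .inl rfl, hcore u hu⟩
  | succ j ih =>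
    obtain ⟨-, hAsucc, hvdeg⟩ := hA j (by omega)
    rw [hAsucc, mem_insert] at hu
    rcases hu with rfl | hu
    · exact ⟨j, .inr j.lt_succ_self, hvdeg⟩
    · obtain ⟨s, hs, hsdeg⟩ := ih (by omega) hu
      exact ⟨s, by omega, hsdeg⟩

lemma le_nbrIn_of_mem (hA : IsGreedyExtension G d A v k)
    (hcore : ∀ x ∈ A 0, d ≤ (nbrIn G x ↑(A 0) : ℝ)) {u : V} (hu : u ∈ A k) :
    d ≤ (nbrIn G u ↑(A k) : ℝ) := by
  obtain ⟨s, hs, hsdeg⟩ := hA.exists_le_nbrIn hcore le_rfl hu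
  exact hsdeg.trans (by exact_mod_cast G.nbrIn_mono u (hA.subset_of_le (by omega) le_rfl))

/-- If the core meets `X` in at most `d / 2` vertices, take the first `A j` meeting `X` in more than
`d / 2` vertices (or `A k` if there is none): every vertex of `A j ∩ X` entered through some `A s`
with `#(A s ∩ X) ≤ d / 2`, so it keeps `d / 2` neighbours outside `X`. -/
lemma exists_subset_half_le_nbrIn_sdiff (hA : IsGreedyExtension G d A v k)
    (hcore : ∀ x ∈ A 0, d ≤ (nbrIn G x ↑(A 0) : ℝ)) {X : Finset V} (hX : X ⊆ A k)
    (hX0 : (#(A 0 ∩ X) : ℝ) ≤ d / 2) :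
    ∃ S ⊆ X, min (#X : ℝ) (d / 2) ≤ #S ∧ ∀ u ∈ S, d / 2 ≤ (nbrIn G u ↑(A k \ X) : ℝ) := by
  classical
  have hex : ∃ j, j = k ∨ d / 2 < #(A j ∩ X) := ⟨k, .inl rfl⟩
  have hjk : Nat.find hex ≤ k := Nat.find_min' hex (.inl rfl)
  have hsparse : ∀ s, s = 0 ∨ s < Nat.find hex → (#(A s ∩ X) : ℝ) ≤ d / 2 := by
    rintro s (rfl | hs)
    · exact hX0
    · exact not_lt.1 (not_or.1 (Nat.find_min hex hs)).2
  refine ⟨A (Nat.find hex) ∩ X, inter_subset_right, ?_, fun u hu => ?_⟩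
  · rcases Nat.find_spec hex with hj | hj
    · rw [hj, inter_eq_right.2 hX]
      exact min_le_left _ _
    · exact (min_le_right _ _).trans hj.le
  · obtain ⟨s, hs, hsdeg⟩ := hA.exists_le_nbrIn hcore hjk (mem_inter.1 hu).1
    have hsplit : (nbrIn G u ↑(A s) : ℝ) ≤ #(A s ∩ X) + nbrIn G u ↑(A k \ X) := by
      exact_mod_cast
        G.nbrIn_le_card_inter_add_nbrIn_sdiff u X (hA.subset_of_le (by omega) le_rfl)
    linarith [hsparse s hs]

variable [Fintype V] {n : ℕ} {α η' : ℝ} {X : Finset V}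

lemma card_add_card_sdiff_le (hA : IsGreedyExtension G d A v k) (hn : Fintype.card V = n)
    (hX : X ⊆ A k) :
    (#X : ℝ) + #(A k \ X) ≤ n := by
  rw [← hn]
  exact_mod_cast (hA.card_add_card_sdiff_eq hX).trans_le
    ((hA.card_eq le_rfl).symm.trans_le (card_le_univ _))

lemma le_eBetween_sdiff_of_card_inter_le (hA : IsGreedyExtension G (η' * n) A v k)
    (hn : Fintype.card V = n)
    (hcore : ∀ x ∈ A 0, η' * n ≤ (nbrIn G x ↑(A 0) : ℝ)) (hα : 0 ≤ α) (hαη' : α ≤ η' / 2)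
    (hX : X ⊆ A k) (hX0 : (#(A 0 ∩ X) : ℝ) ≤ η' * n / 2) :
    α * η' * ((#(A 0) : ℝ) / (#(A 0) + k)) * #X * #(A k \ X) ≤
      (eBetween G ↑X ↑(A k \ X) : ℝ) := by
  rcases X.eq_empty_or_nonempty with rfl | ⟨u, hu⟩
  · simp
  obtain ⟨S, hSX, hS, hSdeg⟩ := hA.exists_subset_half_le_nbrIn_sdiff hcore hX hX0
  have hη' : η' ≤ 1 := G.le_one_of_mul_card_le_nbrIn (hn ▸ hA.le_nbrIn_of_mem hcore (hX hu))
  have hN : ((#(A 0) : ℕ) : ℝ) + k = #X + #(A k \ X) := by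
    exact_mod_cast (hA.card_add_card_sdiff_eq hX).symm
  have hmn : (#(A 0) : ℝ) ≤ n := by
    rw [← hn]; exact_mod_cast card_le_univ _
  rw [hN]
  calc _ ≤ min (#X : ℝ) (η' * n / 2) * (η' * n / 2) :=
        mul_div_add_mul_mul_le_min hα hαη' hη' (by positivity) hmn (by positivity) (by positivity)
          (hA.card_add_card_sdiff_le hn hX)
    _ ≤ #S * (η' * n / 2) := by
        have : 0 ≤ η' := by linarith
        gcongr
    _ ≤ _ := G.card_mul_le_eBetween hSX hSdeg

lemma le_eBetween_sdiff_of_le_card_inter (hA : IsGreedyExtension G d A v k)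
    (hn : Fintype.card V = n) (hα : 0 ≤ α) (hη' : 0 ≤ η')
    (hcut : ∀ Y : Finset V, Y ⊆ A 0 → α * #Y * #(A 0 \ Y) ≤ (eBetween G ↑Y ↑(A 0 \ Y) : ℝ))
    (hX : X ⊆ A k) (hX0 : η' * n / 2 ≤ (#(A 0 ∩ X) : ℝ))
    (hY0 : η' * n / 2 ≤ (#(A 0 ∩ (A k \ X)) : ℝ)) :
    α * η' * ((#(A 0) : ℝ) / (#(A 0) + k)) * #X * #(A k \ X) ≤
      (eBetween G ↑X ↑(A k \ X) : ℝ) := by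
  have hA0k : A 0 ⊆ A k := hA.subset_of_le k.zero_le le_rfl
  rw [← inter_sdiff_assoc, inter_eq_left.2 hA0k] at hY0
  have hcutX := hcut (A 0 ∩ X) inter_subset_left
  rw [sdiff_inter_self_left] at hcutX
  have hmono : (eBetween G ↑(A 0 ∩ X) ↑(A 0 \ X) : ℝ) ≤ eBetween G ↑X ↑(A k \ X) := by
    exact_mod_cast G.eBetween_mono inter_subset_right (sdiff_subset_sdiff hA0k le_rfl)
  have hN : ((#(A 0) : ℕ) : ℝ) + k = #X + #(A k \ X) := by
    exact_mod_cast (hA.card_add_card_sdiff_eq hX).symm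
  have hm : ((#(A 0) : ℕ) : ℝ) = #(A 0 ∩ X) + #(A 0 \ X) := by
    exact_mod_cast (card_inter_add_card_sdiff _ _).symm
  rw [hN, hm]
  calc _ ≤ α * #(A 0 ∩ X) * #(A 0 \ X) :=
        mul_div_add_mul_mul_le_of_le hα hη' hX0 hY0 (by positivity) (by positivity)
          (hA.card_add_card_sdiff_le hn hX)
    _ ≤ _ := hcutX.trans hmono

end IsGreedyExtension

end GreedyExtension

open SimpleGraph

theorem observation_augmentrobust_general {V : Type} [Fintype V] [DecidableEq V]
    (G : SimpleGraph V) (n n₀ k : ℕ) (hn : Fintype.card V = n)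
    (η η' α : ℝ) (hα : 0 < α) (h1 : α ≤ η' / 2) (h2 : η' / 2 ≤ η / 2)
    (A : ℕ → Finset V) (v : ℕ → V) (hA0 : (A 0).card = n₀)
    (hrobdeg : ∀ x ∈ A 0, η * n ≤ (nbrIn G x ↑(A 0) : ℝ))
    (hrobcut : ∀ X : Finset V, X ⊆ A 0 →
      α * X.card * (A 0 \ X).card ≤ (eBetween G ↑X ↑(A 0 \ X) : ℝ))
    (hstep : ∀ i < k, v (i + 1) ∉ A i ∧ A (i + 1) = insert (v (i + 1)) (A i) ∧
      η' * n ≤ (nbrIn G (v (i + 1)) ↑(A i) : ℝ)) :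
    (∀ x ∈ A k, η' * n ≤ (nbrIn G x ↑(A k) : ℝ)) ∧
      ∀ X : Finset V, X ⊆ A k →
        α * η' * ((n₀ : ℝ) / (n₀ + k)) * X.card * ((A k \ X).card) ≤
          (eBetween G ↑X ↑(A k \ X) : ℝ) := by
  subst hA0
  have hA : IsGreedyExtension G (η' * n) A v k := hstep
  have hcore : ∀ x ∈ A 0, η' * n ≤ (nbrIn G x ↑(A 0) : ℝ) := fun x hx =>
    le_trans (by gcongr; linarith) (hrobdeg x hx)
  refine ⟨fun x hx => hA.le_nbrIn_of_mem hcore hx, fun X hX => ?_⟩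
  by_cases hX0 : (#(A 0 ∩ X) : ℝ) ≤ η' * n / 2
  · exact hA.le_eBetween_sdiff_of_card_inter_le hn hcore hα.le h1 hX hX0
  by_cases hY0 : (#(A 0 ∩ (A k \ X)) : ℝ) ≤ η' * n / 2
  · have hY := hA.le_eBetween_sdiff_of_card_inter_le hn hcore hα.le h1 sdiff_subset hY0
    rw [Finset.sdiff_sdiff_eq_self hX, eBetween_comm] at hY
    linarith
  · exact hA.le_eBetween_sdiff_of_le_card_inter hn hα.le (by linarith) hrobcut hX (not_le.1 hX0).le
      (not_le.1 hY0).le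

/-- let `0 < α ≤ η'/2 ≤ η/2` and let `G` be a graph on `n` vertices.
Suppose `H⁰`, the subgraph induced on the vertex set `A 0` of size `n₀`, is
`(η, α)`-robust, and `H^k` (induced on `A k`) is an `η'`-maximal extension of `H⁰`:
at each step a vertex with at least `η'n` neighbors inside is added, and at the end no
vertex outside has `η'n` neighbors inside.  Then `H^k` is `(η', αη'τ)`-robust with
`τ = n₀/(n₀ + k)`. -/
theorem observation_augmentrobust {V : Type} [Fintype V] [DecidableEq V]
    (G : SimpleGraph V) (n n₀ k : ℕ) (hn : Fintype.card V = n)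
    (η η' α : ℝ) (hα : 0 < α) (h1 : α ≤ η' / 2) (h2 : η' / 2 ≤ η / 2)
    (A : ℕ → Finset V) (v : ℕ → V) (hA0 : (A 0).card = n₀)
    (hrobdeg : ∀ x ∈ A 0, η * n ≤ (nbrIn G x ↑(A 0) : ℝ))
    (hrobcut : ∀ X : Finset V, X ⊆ A 0 →
      α * X.card * (A 0 \ X).card ≤ (eBetween G ↑X ↑(A 0 \ X) : ℝ))
    (hstep : ∀ i < k, v (i + 1) ∉ A i ∧ A (i + 1) = insert (v (i + 1)) (A i) ∧
      η' * n ≤ (nbrIn G (v (i + 1)) ↑(A i) : ℝ))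
    (hmax : ∀ u ∉ A k, (nbrIn G u ↑(A k) : ℝ) < η' * n) :
    (∀ x ∈ A k, η' * n ≤ (nbrIn G x ↑(A k) : ℝ)) ∧
      ∀ X : Finset V, X ⊆ A k →
        α * η' * ((n₀ : ℝ) / (n₀ + k)) * X.card * ((A k \ X).card) ≤
          (eBetween G ↑X ↑(A k \ X) : ℝ) :=
  observation_augmentrobust_general G n n₀ k hn η η' α hα h1 h2 A v hA0 hrobdeg hrobcut hstep
end

section
/- Let G be a balanced bipartite graph with parts S and T of equal size m ≥ 2. Suppose every vertex of S has more than m/2 + 1 neighbors in T and every vertex of T has more than m/2 + 1 neighbors in S. Then for every x ∈ S and y ∈ T, G contains a Hamiltonian path with endpoints x and y. -/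
/-!
Delete `x` and `y`. What is left is bipartite with parts `A = S \ {x}`, `B = T \ {y}` of equal
size `n`, and every vertex has at least `n / 2 + 1` neighbours on the other side. Everything rests
on a pigeonhole over the consecutive pairs `(a, b)` of a path: if `u` is adjacent to many vertices
of the path on one side and `w` to many on the other, some consecutive pair has `u ~ a`, `w ~ b`.

Take a longest path `h … e` in `G - x - y`. With `u` off the path and `w = h`, the pair would give
the longer path `u, a, …, h, b, …, e`; so the path contains the whole side opposite to `h`, and
likewise the side opposite to `e`. As the path alternates, `h` and `e` then lie on opposite sides,
and `u = e`, `w = h` closes it into the cycle `a, …, h, b, …, e, a` through all of `A ∪ B`.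
Finally `u = x`, `w = y` on that cycle gives its edge `ab`, and `x, a, …, b, y`, going round the
cycle away from `ab`, is the Hamiltonian path.
-/

open Finset

namespace List

variable {α : Type*} {p q r : α → Prop} [DecidablePred p] [DecidablePred q] [DecidablePred r]

theorem exists_eq_append_cons_cons_of_countP_lt :
    ∀ {l : List α}, (∀ a ∈ l, p a → r a) → l.IsChain (fun a b => q b → r a) →
      l.countP (r ·) < l.countP (p ·) + l.tail.countP (q ·) →
      ∃ l₁ a b l₂, l = l₁ ++ a :: b :: l₂ ∧ p a ∧ q b
  | [], _, _, h => by simp at h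
  | [a], hpr, _, h => by
    have := hpr a (mem_singleton_self a)
    by_cases hp : p a <;> simp_all
  | a :: b :: l, hpr, hqr, h => by
    by_cases hab : p a ∧ q b
    · exact ⟨[], a, b, l, rfl, hab⟩
    have hra := hpr a mem_cons_self
    have hrb := hqr.rel
    obtain ⟨l₁, c, d, l₂, hl, hc, hd⟩ := exists_eq_append_cons_cons_of_countP_lt (l := b :: l)
      (fun c hc => hpr c (mem_cons_of_mem a hc)) hqr.tail (by
        simp only [countP_cons, tail_cons] at h ⊢
        by_cases hp : p a <;> by_cases hq : q b <;> simp_all <;> omega)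
    exact ⟨a :: l₁, c, d, l₂, by rw [hl, cons_append], hc, hd⟩

theorem countP_dropLast_le_countP_tail :
    ∀ {l : List α}, l.IsChain (fun a b => p a → q b) →
      l.dropLast.countP (p ·) ≤ l.tail.countP (q ·)
  | [], _ | [_], _ => by simp
  | a :: b :: l, h => by
    have ih := countP_dropLast_le_countP_tail h.tail
    have hab := h.rel
    simp only [dropLast_cons_cons, tail_cons, countP_cons] at ih ⊢
    split_ifs <;> first | omega | simp_all

theorem countP_le_countP_tail_add_one (l : List α) :
    l.countP (p ·) ≤ l.tail.countP (p ·) + 1 := by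
  cases l with
  | nil => simp
  | cons a l => simp only [countP_cons, tail_cons]; split <;> omega

variable [DecidableEq α] {l : List α} {s : Finset α}

theorem Nodup.countP_eq_card_filter (hl : l.Nodup) (h : ∀ a, p a → (a ∈ l ↔ a ∈ s)) :
    l.countP (p ·) = #{a ∈ s | p a} := by
  rw [← hl.card_eq_countP]
  refine congrArg card (Finset.ext fun a => ?_)
  simp only [Finset.mem_filter, mem_toFinset]
  exact ⟨fun ⟨ha, hp⟩ => ⟨(h a hp).1 ha, hp⟩, fun ⟨ha, hp⟩ => ⟨(h a hp).2 ha, hp⟩⟩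

theorem Nodup.countP_mem_eq_card (hl : l.Nodup) (h : ∀ a ∈ s, a ∈ l) :
    l.countP (· ∈ s) = #s := by
  rw [hl.countP_eq_card_filter fun a ha => ⟨fun _ => ha, fun _ => h a ha⟩,
    filter_true_of_mem fun _ h => h]

end List

theorem Finset.add_two_le_two_mul_card_filter_erase {α : Type*} [DecidableEq α] {s : Finset α}
    {a : α} {P : α → Prop} [DecidablePred P] (ha : a ∈ s) (h : #s + 3 ≤ 2 * #{x ∈ s | P x}) :
    #(s.erase a) + 2 ≤ 2 * #{x ∈ s.erase a | P x} := by
  rw [filter_erase, card_erase_of_mem ha]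
  have := pred_card_le_card_erase (s := {x ∈ s | P x}) (a := a)
  have := card_pos.2 ⟨a, ha⟩
  omega

namespace SimpleGraph

variable {V : Type*} (G : SimpleGraph V)

structure IsPathIn (W : Finset V) (l : List V) : Prop where
  isChain : l.IsChain G.Adj
  nodup : l.Nodup
  subset : ∀ v ∈ l, v ∈ W

structure IsLongestPathIn (W : Finset V) (l : List V) : Prop extends G.IsPathIn W l where
  length_le : ∀ l', G.IsPathIn W l' → l'.length ≤ l.length

/-- For `#W ≤ 2` this is not a cycle in the graph-theoretic sense: the closing edge from the last
vertex back to the first may repeat an edge of the list. -/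
structure IsSpanningCycleIn (W : Finset V) (c : List V) : Prop extends G.IsPathIn W c where
  mem : ∀ v ∈ W, v ∈ c
  adj_getLast_head : ∀ u ∈ c.getLast?, ∀ w ∈ c.head?, G.Adj u w

variable {G} {W W' : Finset V} {l l₁ l₂ : List V} {a b h x y v : V}

namespace IsPathIn

theorem of_perm (hl : G.IsPathIn W l) (hp : l₁.Perm l) (hc : l₁.IsChain G.Adj) :
    G.IsPathIn W l₁ :=
  ⟨hc, hp.nodup_iff.2 hl.nodup, fun v hv => hl.subset v (hp.subset hv)⟩

theorem mono (hl : G.IsPathIn W l) (hW : W ⊆ W') : G.IsPathIn W' l :=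
  ⟨hl.isChain, hl.nodup, fun v hv => hW (hl.subset v hv)⟩

theorem cons (hl : G.IsPathIn W l) (hv : v ∈ W) (hvl : v ∉ l)
    (hadj : ∀ w ∈ l.head?, G.Adj v w) : G.IsPathIn W (v :: l) :=
  ⟨List.isChain_cons.2 ⟨hadj, hl.isChain⟩, List.nodup_cons.2 ⟨hvl, hl.nodup⟩,
    List.forall_mem_cons.2 ⟨hv, hl.subset⟩⟩

theorem reverse (hl : G.IsPathIn W l) : G.IsPathIn W l.reverse :=
  hl.of_perm (List.reverse_perm l) (List.isChain_reverse.2 (hl.isChain.imp fun _ _ h => h.symm))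

theorem concat (hl : G.IsPathIn W l) (hv : v ∈ W) (hvl : v ∉ l)
    (hadj : ∀ w ∈ l.getLast?, G.Adj w v) : G.IsPathIn W (l ++ [v]) := by
  simpa using (hl.reverse.cons hv (by simpa using hvl)
    (by simpa using fun w hw => (hadj w hw).symm)).reverse

theorem reverse_append (hl : G.IsPathIn W (l₁ ++ l₂))
    (h : ∀ a ∈ l₁.head?, ∀ b ∈ l₂.head?, G.Adj a b) : G.IsPathIn W (l₁.reverse ++ l₂) := by
  obtain ⟨h₁, h₂, -⟩ := List.isChain_append.1 hl.isChain
  exact hl.of_perm ((List.reverse_perm l₁).append_right l₂)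
    ((List.isChain_reverse.2 (h₁.imp fun _ _ h => h.symm)).append h₂ (by simpa using h))

theorem reverse_append_of_adj_head (hl : G.IsPathIn W (l₁ ++ a :: b :: l₂))
    (hh : (l₁ ++ a :: b :: l₂).head? = some h) (hhb : G.Adj h b) :
    G.IsPathIn W ((l₁ ++ [a]).reverse ++ b :: l₂) := by
  simp only [List.head?_append, List.head?_cons, Option.or_some, Option.some.injEq] at hh
  exact (by simpa using hl : G.IsPathIn W (l₁ ++ [a] ++ b :: l₂)).reverse_append
    (by simpa [hh] using hhb)

theorem append_comm (hl : G.IsPathIn W (l₁ ++ l₂))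
    (h : ∀ a ∈ l₂.getLast?, ∀ b ∈ l₁.head?, G.Adj a b) : G.IsPathIn W (l₂ ++ l₁) := by
  obtain ⟨h₁, h₂, -⟩ := List.isChain_append.1 hl.isChain
  exact hl.of_perm List.perm_append_comm (h₂.append h₁ h)

end IsPathIn

variable (G) in
theorem exists_isLongestPathIn (W : Finset V) : ∃ l, G.IsLongestPathIn W l := by
  classical
  have hbound (l : List V) (hl : G.IsPathIn W l) : l.length ≤ #W := by
    rw [← List.toFinset_card_of_nodup hl.nodup]
    exact card_le_card fun v hv => hl.subset v (List.mem_toFinset.1 hv)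
  obtain ⟨l, hl, hlen⟩ := Nat.findGreatest_spec
    (P := fun k => ∃ l, G.IsPathIn W l ∧ l.length = k) (Nat.zero_le _)
    ⟨[], ⟨.nil, List.nodup_nil, by simp⟩, rfl⟩
  exact ⟨l, hl, fun l' hl' => hlen ▸ Nat.le_findGreatest (hbound l' hl') ⟨l', hl', rfl⟩⟩

namespace IsLongestPathIn

theorem reverse (hl : G.IsLongestPathIn W l) : G.IsLongestPathIn W l.reverse :=
  ⟨hl.toIsPathIn.reverse, by simpa using hl.length_le⟩

theorem mem_of_adj_head (hl : G.IsLongestPathIn W l) (hh : l.head? = some h) (hv : v ∈ W)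
    (hadj : G.Adj v h) : v ∈ l := by
  by_contra hvl
  have := hl.length_le _ (hl.toIsPathIn.cons hv hvl (by simpa [hh] using hadj))
  simp at this

end IsLongestPathIn

theorem IsBipartiteWith.isIndepSet_left {s t : Set V} (h : G.IsBipartiteWith s t) :
    G.IsIndepSet s :=
  fun _ hu _ hv _ huv => Set.disjoint_left.1 h.disjoint hv (h.mem_of_mem_adj hu huv)

theorem exists_walk_support_eq (hl : l.IsChain G.Adj) (hx : l.head? = some x)
    (hy : l.getLast? = some y) : ∃ p : G.Walk x y, p.support = l := by
  have hne : l ≠ [] := by rintro rfl; simp at hx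
  have hx' : l.head hne = x := by simpa [List.head?_eq_some_head hne] using hx
  have hy' : l.getLast hne = y := by simpa [List.getLast?_eq_some_getLast hne] using hy
  exact ⟨(Walk.ofSupport l hne hl).copy hx' hy', by simp⟩

section DecidableRel

variable [DecidableRel G.Adj] {A B : Finset V}

variable (G) in
structure IsDenseBipartite (A B : Finset V) : Prop where
  disjoint : Disjoint A B
  isIndepSet_left : G.IsIndepSet A
  isIndepSet_right : G.IsIndepSet B
  card_eq : #A = #B
  degree_left : ∀ a ∈ A, #B + 2 ≤ 2 * #{b ∈ B | G.Adj a b}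
  degree_right : ∀ b ∈ B, #A + 2 ≤ 2 * #{a ∈ A | G.Adj b a}

theorem IsDenseBipartite.symm (hAB : G.IsDenseBipartite A B) : G.IsDenseBipartite B A :=
  ⟨hAB.disjoint.symm, hAB.isIndepSet_right, hAB.isIndepSet_left, hAB.card_eq.symm,
    hAB.degree_right, hAB.degree_left⟩

end DecidableRel

section DecidableEq

variable [DecidableEq V] {A B : Finset V}

theorem mem_left_of_adj (hB : G.IsIndepSet B) (hv : v ∈ B) (hw : w ∈ A ∪ B)
    (hadj : G.Adj v w) : w ∈ A :=
  (mem_union.1 hw).resolve_right fun hwB => hB hv hwB hadj.ne hadj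

theorem IsPathIn.exists_isPath_of_cycle (hc : G.IsPathIn W (l₁ ++ a :: b :: l₂))
    (hclose : ∀ u ∈ (l₁ ++ a :: b :: l₂).getLast?, ∀ w ∈ (l₁ ++ a :: b :: l₂).head?, G.Adj u w)
    (hx : x ∉ W) (hy : y ∉ W) (hxy : x ≠ y) (hxa : G.Adj x a) (hyb : G.Adj y b) :
    ∃ p : G.Walk x y, p.IsPath ∧ ∀ v ∈ l₁ ++ a :: b :: l₂, v ∈ p.support := by
  have hrot : G.IsPathIn W (b :: l₂ ++ (l₁ ++ [a])) :=
    (by simpa using hc : G.IsPathIn W (l₁ ++ [a] ++ b :: l₂)).append_comm (by simpa using hclose)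
  have hP : G.IsPathIn (insert x (insert y W))
      (x :: ((b :: l₂ ++ (l₁ ++ [a])).reverse ++ [y])) := by
    refine ((hrot.mono ?_).reverse.concat ?_ ?_ ?_).cons (mem_insert_self x _) ?_ ?_
    · exact (subset_insert y W).trans (subset_insert x _)
    · exact mem_insert_of_mem (mem_insert_self y W)
    · exact fun h => hy (hrot.subset y (List.mem_reverse.1 h))
    · rw [List.getLast?_reverse]
      simpa using hyb.symm
    · rw [List.mem_append, List.mem_reverse, List.mem_singleton]
      exact fun h => h.elim (fun h => hx (hrot.subset x h)) hxy
    · rw [List.head?_append, List.head?_reverse, ← List.append_assoc, List.getLast?_concat]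
      simpa using hxa
  obtain ⟨p, hp⟩ :=
    exists_walk_support_eq hP.isChain rfl (List.getLast?_eq_some_iff.2 ⟨x :: _, rfl⟩)
  refine ⟨p, .mk' (hp ▸ hP.nodup), fun v hv => ?_⟩
  rw [hp]
  exact List.mem_cons_of_mem _
    (List.mem_append_left _ (List.mem_reverse.2
      (List.perm_append_comm.subset (by simpa using hv : v ∈ l₁ ++ [a] ++ b :: l₂))))

variable [DecidableRel G.Adj]

/-- `+ 2` rather than `+ 1`: a neighbour of `w` at the head of `l` has no predecessor. -/
theorem IsPathIn.exists_crossing {u w : V} (hB : G.IsIndepSet B) (hl : G.IsPathIn (A ∪ B) l)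
    (hu : ∀ a ∈ l, G.Adj u a → a ∈ A) (hw : ∀ b ∈ l, G.Adj w b → b ∈ B)
    (hcount : l.countP (· ∈ A) + 2 ≤ l.countP (G.Adj u ·) + l.countP (G.Adj w ·)) :
    ∃ l₁ a b l₂, l = l₁ ++ a :: b :: l₂ ∧ G.Adj u a ∧ G.Adj w b := by
  refine l.exists_eq_append_cons_cons_of_countP_lt hu (hl.isChain.imp_of_mem_imp
    fun a b ha hb hab hwb => mem_left_of_adj hB (hw b hb hwb) (hl.subset a ha) hab.symm) ?_
  have := l.countP_le_countP_tail_add_one (p := (G.Adj w ·))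
  omega

namespace IsDenseBipartite

variable (hAB : G.IsDenseBipartite A B)
include hAB

theorem forall_mem_of_head_mem (hl : G.IsLongestPathIn (A ∪ B) l) (hh : l.head? = some h)
    (hhA : h ∈ A) : ∀ v ∈ B, v ∈ l := by
  intro v hvB
  by_contra hvl
  have hv_adj (a) (ha : a ∈ l) : G.Adj v a → a ∈ A :=
    mem_left_of_adj hAB.isIndepSet_right hvB (hl.subset a ha)
  have hh_adj (b) (hb : b ∈ l) : G.Adj h b → b ∈ B :=
    mem_left_of_adj hAB.isIndepSet_left hhA (union_comm A B ▸ hl.subset b hb)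
  have hdh : l.countP (G.Adj h ·) = #{b ∈ B | G.Adj h b} :=
    hl.nodup.countP_eq_card_filter fun b hhb => ⟨fun hb => hh_adj b hb hhb,
      fun hbB => hl.mem_of_adj_head hh (mem_union_right A hbB) hhb.symm⟩
  have hdv : #{a ∈ A | G.Adj v a} ≤ l.countP (G.Adj v ·) + #(A \ l.toFinset) := by
    rw [← hl.nodup.card_eq_countP]
    refine (card_le_card fun a ha => ?_).trans (card_union_le _ _)
    by_cases hal : a ∈ l <;> simp_all
  have hcA : l.countP (· ∈ A) + #(A \ l.toFinset) = #A := by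
    rw [← hl.nodup.card_eq_countP, filter_mem_eq_inter, inter_comm, card_inter_add_card_sdiff]
  obtain ⟨l₁, a, b, l₂, rfl, hva, hhb⟩ :=
    hl.exists_crossing hAB.isIndepSet_right hv_adj hh_adj (by
      have := hAB.degree_left h hhA
      have := hAB.degree_right v hvB
      have := hAB.card_eq
      omega)
  have := hl.length_le _ ((hl.reverse_append_of_adj_head hh hhb).cons (mem_union_right A hvB)
    (by simpa [or_left_comm] using hvl) (by simpa using hva))
  simp only [List.length_cons, List.length_append, List.length_reverse] at this
  omega

theorem exists_isSpanningCycleIn_of_path {e : V} (hl : G.IsPathIn (A ∪ B) l)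
    (hcov : ∀ v ∈ A ∪ B, v ∈ l) (hh : l.head? = some h) (he : l.getLast? = some e)
    (hhA : h ∈ A) (heB : e ∈ B) : ∃ c, G.IsSpanningCycleIn (A ∪ B) c := by
  have he_adj (a) (ha : a ∈ l) : G.Adj e a → a ∈ A :=
    mem_left_of_adj hAB.isIndepSet_right heB (hl.subset a ha)
  have hh_adj (b) (hb : b ∈ l) : G.Adj h b → b ∈ B :=
    mem_left_of_adj hAB.isIndepSet_left hhA (union_comm A B ▸ hl.subset b hb)
  have hcA : l.countP (· ∈ A) = #A :=
    hl.nodup.countP_mem_eq_card fun a ha => hcov a (mem_union_left B ha)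
  have hde : l.countP (G.Adj e ·) = #{a ∈ A | G.Adj e a} :=
    hl.nodup.countP_eq_card_filter fun a hea =>
      ⟨fun ha => he_adj a ha hea, fun haA => hcov a (mem_union_left B haA)⟩
  have hdh : l.countP (G.Adj h ·) = #{b ∈ B | G.Adj h b} :=
    hl.nodup.countP_eq_card_filter fun b hhb =>
      ⟨fun hb => hh_adj b hb hhb, fun hbB => hcov b (mem_union_right A hbB)⟩
  obtain ⟨l₁, a, b, l₂, rfl, hea, hhb⟩ :=
    hl.exists_crossing hAB.isIndepSet_right he_adj hh_adj (by
      have := hAB.degree_left h hhA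
      have := hAB.degree_right e heB
      have := hAB.card_eq
      omega)
  refine ⟨_, hl.reverse_append_of_adj_head hh hhb,
    fun v hv => by simpa [or_left_comm] using hcov v hv, ?_⟩
  rw [List.getLast?_append_of_ne_nil _ (List.cons_ne_nil _ _), List.getLast?_cons_cons] at he
  rw [List.getLast?_append_of_ne_nil _ (List.cons_ne_nil b l₂), List.head?_append,
    List.head?_reverse, List.getLast?_concat, he]
  simpa using hea

theorem false_of_head_mem_of_getLast_mem {e : V} (hl : G.IsPathIn (A ∪ B) l)
    (hB : ∀ v ∈ B, v ∈ l) (hh : l.head? = some h) (he : l.getLast? = some e) (hhA : h ∈ A)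
    (heA : e ∈ A) : False := by
  have key := List.countP_dropLast_le_countP_tail (p := (· ∈ B)) (q := (· ∈ A))
    (hl.isChain.imp_of_mem_imp fun a b _ hb hab haB =>
      mem_left_of_adj hAB.isIndepSet_right haB (hl.subset b hb) hab)
  have hcB : l.countP (· ∈ B) = #B := hl.nodup.countP_mem_eq_card hB
  have hcA : l.countP (· ∈ A) ≤ #A := by
    rw [← hl.nodup.card_eq_countP]
    exact card_le_card fun a ha => (mem_filter.1 ha).2
  have hdrop : l.dropLast.countP (· ∈ B) = l.countP (· ∈ B) := by
    obtain ⟨s, rfl⟩ := List.getLast?_eq_some_iff.1 he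
    simp [Finset.disjoint_left.1 hAB.disjoint heA]
  have htail : l.countP (· ∈ A) = l.tail.countP (· ∈ A) + 1 := by
    obtain ⟨t, rfl⟩ := List.head?_eq_some_iff.1 hh
    simp [hhA]
  have := hAB.card_eq
  omega

theorem exists_isSpanningCycleIn_of_isLongestPathIn (hl : G.IsLongestPathIn (A ∪ B) l)
    (hh : l.head? = some h) (hhA : h ∈ A) : ∃ c, G.IsSpanningCycleIn (A ∪ B) c := by
  have hB := hAB.forall_mem_of_head_mem hl hh hhA
  obtain ⟨e, he⟩ : ∃ e, l.getLast? = some e :=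
    Option.isSome_iff_exists.1 (List.getLast?_isSome.2 (by rintro rfl; simp at hh))
  rcases mem_union.1 (hl.subset e (List.mem_of_getLast? he)) with heA | heB
  · exact (hAB.false_of_head_mem_of_getLast_mem hl.toIsPathIn hB hh he hhA heA).elim
  have hA := hAB.symm.forall_mem_of_head_mem (union_comm A B ▸ hl.reverse) (by simpa using he) heB
  exact hAB.exists_isSpanningCycleIn_of_path hl.toIsPathIn
    (fun v hv => (mem_union.1 hv).elim (fun hvA => by simpa using hA v hvA) (hB v)) hh he hhA heB

theorem exists_isSpanningCycleIn : ∃ c, G.IsSpanningCycleIn (A ∪ B) c := by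
  obtain ⟨_ | ⟨h, t⟩, hl⟩ := G.exists_isLongestPathIn (A ∪ B)
  · refine ⟨[], hl.toIsPathIn, fun v hv => ?_, by simp⟩
    simpa using hl.length_le [v] ⟨.singleton v, List.nodup_singleton v, by simpa using hv⟩
  rcases mem_union.1 (hl.subset h List.mem_cons_self) with hhA | hhB
  · exact hAB.exists_isSpanningCycleIn_of_isLongestPathIn hl rfl hhA
  · simpa only [union_comm] using
      hAB.symm.exists_isSpanningCycleIn_of_isLongestPathIn (union_comm A B ▸ hl) rfl hhB

end IsDenseBipartite

variable {S T : Finset V}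

theorem IsBipartiteWith.isDenseBipartite_erase (hST : G.IsBipartiteWith S T) (hcard : #S = #T)
    (hdS : ∀ s ∈ S, #T + 3 ≤ 2 * #{t ∈ T | G.Adj s t})
    (hdT : ∀ t ∈ T, #S + 3 ≤ 2 * #{s ∈ S | G.Adj t s}) (hx : x ∈ S) (hy : y ∈ T) :
    G.IsDenseBipartite (S.erase x) (T.erase y) where
  disjoint := (disjoint_coe.1 hST.disjoint).mono (erase_subset x S) (erase_subset y T)
  isIndepSet_left := hST.isIndepSet_left.mono (coe_subset.2 (erase_subset x S))
  isIndepSet_right := hST.symm.isIndepSet_left.mono (coe_subset.2 (erase_subset y T))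
  card_eq := by rw [card_erase_of_mem hx, card_erase_of_mem hy, hcard]
  degree_left a ha := add_two_le_two_mul_card_filter_erase hy (hdS a (mem_of_mem_erase ha))
  degree_right b hb := add_two_le_two_mul_card_filter_erase hx (hdT b (mem_of_mem_erase hb))

theorem IsBipartiteWith.exists_isPath_forall_mem_support (hST : G.IsBipartiteWith S T)
    (hcard : #S = #T) (hdS : ∀ s ∈ S, #T + 3 ≤ 2 * #{t ∈ T | G.Adj s t})
    (hdT : ∀ t ∈ T, #S + 3 ≤ 2 * #{s ∈ S | G.Adj t s}) (hx : x ∈ S) (hy : y ∈ T) :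
    ∃ p : G.Walk x y, p.IsPath ∧ ∀ v ∈ S ∪ T, v ∈ p.support := by
  set A := S.erase x
  set B := T.erase y
  have hAB := hST.isDenseBipartite_erase hcard hdS hdT hx hy
  obtain ⟨c, hc, hcov, hclose⟩ := hAB.exists_isSpanningCycleIn
  have hxT : x ∉ T := Set.disjoint_left.1 hST.disjoint hx
  have hyS : y ∉ S := Set.disjoint_right.1 hST.disjoint hy
  have hxAB : x ∉ A ∪ B := by simp [A, B, hxT]
  have hyAB : y ∉ A ∪ B := by simp [A, B, hyS]
  have hx_adj (b) (hb : b ∈ c) (hxb : G.Adj x b) : b ∈ B :=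
    mem_erase.2 ⟨fun h => hyAB (h ▸ hc.subset b hb), hST.mem_of_mem_adj hx hxb⟩
  have hy_adj (a) (ha : a ∈ c) (hya : G.Adj y a) : a ∈ A :=
    mem_erase.2 ⟨fun h => hxAB (h ▸ hc.subset a ha), hST.mem_of_mem_adj' hy hya.symm⟩
  have hcB : c.countP (· ∈ B) = #B :=
    hc.nodup.countP_mem_eq_card fun b hb => hcov b (mem_union_right A hb)
  have hdx : c.countP (G.Adj x ·) = #{b ∈ B | G.Adj x b} := hc.nodup.countP_eq_card_filter
    fun b hxb => ⟨fun hb => hx_adj b hb hxb, fun hb => hcov b (mem_union_right A hb)⟩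
  have hdy : c.countP (G.Adj y ·) = #{a ∈ A | G.Adj y a} := hc.nodup.countP_eq_card_filter
    fun a hya => ⟨fun ha => hy_adj a ha hya, fun ha => hcov a (mem_union_left B ha)⟩
  obtain ⟨l₁, a, b, l₂, rfl, hxa, hyb⟩ :=
    (union_comm A B ▸ hc).exists_crossing hAB.isIndepSet_left hx_adj hy_adj (by
      have : #A = #B := hAB.card_eq
      have : #B + 2 ≤ 2 * #{b ∈ B | G.Adj x b} :=
        add_two_le_two_mul_card_filter_erase hy (hdS x hx)
      have : #A + 2 ≤ 2 * #{a ∈ A | G.Adj y a} :=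
        add_two_le_two_mul_card_filter_erase hx (hdT y hy)
      omega)
  obtain ⟨p, hp, hmem⟩ :=
    hc.exists_isPath_of_cycle hclose hxAB hyAB (ne_of_mem_of_not_mem hx hyS) hxa hyb
  refine ⟨p, hp, fun v hv => ?_⟩
  by_cases hvx : v = x
  · exact hvx ▸ p.start_mem_support
  by_cases hvy : v = y
  · exact hvy ▸ p.end_mem_support
  exact hmem v (hcov v (by simp_all [A, B]))

end DecidableEq

theorem add_three_le_two_mul_card_filter_adj [DecidableRel G.Adj] {Y : Set V} [Fintype Y]
    (h : (#Y.toFinset : ℝ) / 2 + 1 < (G.neighborSet v ∩ Y).ncard) :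
    #Y.toFinset + 3 ≤ 2 * #{w ∈ Y.toFinset | G.Adj v w} := by
  have hcard : (G.neighborSet v ∩ Y).ncard = #{w ∈ Y.toFinset | G.Adj v w} := by
    rw [← Set.ncard_coe_finset]
    congr 1
    ext w
    simp [and_comm]
  rw [hcard] at h
  have : ((#Y.toFinset + 2 : ℕ) : ℝ) < ((2 * #{w ∈ Y.toFinset | G.Adj v w} : ℕ) : ℝ) := by
    push_cast
    linarith
  have : #Y.toFinset + 2 < 2 * #{w ∈ Y.toFinset | G.Adj v w} := by exact_mod_cast this
  omega

end SimpleGraph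

theorem bipartite_hamiltonian_biconnected_general {V : Type} [Fintype V] [DecidableEq V] (G : SimpleGraph V)
    (S T : Set V) (m : ℕ)
    (hdisj : Disjoint S T) (hcov : S ∪ T = Set.univ)
    (hS : S.ncard = m) (hT : T.ncard = m)
    (hbip : ∀ u v : V, G.Adj u v → (u ∈ S ∧ v ∈ T) ∨ (u ∈ T ∧ v ∈ S))
    (hdS : ∀ x ∈ S, (m : ℝ) / 2 + 1 < ((G.neighborSet x ∩ T).ncard : ℝ))
    (hdT : ∀ y ∈ T, (m : ℝ) / 2 + 1 < ((G.neighborSet y ∩ S).ncard : ℝ)) :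
    ∀ x ∈ S, ∀ y ∈ T, ∃ p : G.Walk x y, p.IsHamiltonian := by
  classical
  intro x hx y hy
  rw [Set.ncard_eq_toFinset_card'] at hS hT
  have hST : G.IsBipartiteWith S.toFinset T.toFinset := by
    simpa using (⟨hdisj, hbip⟩ : G.IsBipartiteWith S T)
  obtain ⟨p, hp, hmem⟩ := hST.exists_isPath_forall_mem_support (hS.trans hT.symm)
    (fun s hs => SimpleGraph.add_three_le_two_mul_card_filter_adj
      (hT ▸ hdS s (Set.mem_toFinset.1 hs)))
    (fun t ht => SimpleGraph.add_three_le_two_mul_card_filter_adj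
      (hS ▸ hdT t (Set.mem_toFinset.1 ht)))
    (Set.mem_toFinset.2 hx) (Set.mem_toFinset.2 hy)
  exact ⟨p, fun v => List.count_eq_one_of_mem hp.support_nodup
    (hmem v (by simp [← Set.toFinset_union, hcov]))⟩

/-- let `G` be a balanced bipartite graph with parts `S` and `T` of equal
size `m ≥ 2`, in which every vertex of `S` has more than `m/2 + 1` neighbors in `T` and
every vertex of `T` has more than `m/2 + 1` neighbors in `S`.  Then for every `x ∈ S`
and `y ∈ T` there is a Hamiltonian path from `x` to `y`. -/
theorem bipartite_hamiltonian_biconnected {V : Type} [Fintype V] [DecidableEq V] (G : SimpleGraph V)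
    (S T : Set V) (m : ℕ)
    (hdisj : Disjoint S T) (hcov : S ∪ T = Set.univ)
    (hS : S.ncard = m) (hT : T.ncard = m) (hm : 2 ≤ m)
    (hbip : ∀ u v : V, G.Adj u v → (u ∈ S ∧ v ∈ T) ∨ (u ∈ T ∧ v ∈ S))
    (hdS : ∀ x ∈ S, (m : ℝ) / 2 + 1 < ((G.neighborSet x ∩ T).ncard : ℝ))
    (hdT : ∀ y ∈ T, (m : ℝ) / 2 + 1 < ((G.neighborSet y ∩ S).ncard : ℝ)) :
    ∀ x ∈ S, ∀ y ∈ T, ∃ p : G.Walk x y, p.IsHamiltonian :=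
  bipartite_hamiltonian_biconnected_general G S T m hdisj hcov hS hT hbip hdS hdT
end
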